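/- arXiv:2401.14825 — 11 statements merged into one kernel-verified Lean document; each statement's English description precedes it below -/
import Mathlib

section
/- For a connected simple graph G and n agents with additive utility functions, every maximum Nash welfare (MNW) connected allocation is (1/2)-PMMS. -/
namespace GraphFair

variable {V : Type*}

/-- A bundle is connected if it is empty or induces a connected subgraph of `G`. -/
def BundleConn (G : SimpleGraph V) (B : Finset V) : Prop :=
  B = ∅ ∨ (G.induce (B : Set V)).Connected

/-- A connected allocation of all the items among `n` agents: the bundles cover `V`,
are pairwise disjoint, and each bundle is connected in `G`. -/
def IsConnAlloc (G : SimpleGraph V) {n : ℕ} (A : Fin n → Finset V) : Prop :=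
  (∀ v : V, ∃ i, v ∈ A i) ∧
  (∀ i j : Fin n, i ≠ j → Disjoint (A i) (A j)) ∧
  (∀ i, BundleConn G (A i))

variable [DecidableEq V]

/-- Partitions of `X` into two bundles, each connected in the induced subgraph `G[X]`
(for `Y ⊆ X`, connectivity of `Y` in `G[X]` is the same as connectivity of `Y` in `G`). -/
def Part2 (G : SimpleGraph V) (X : Finset V) : Set (Finset V × Finset V) :=
  {p | p.1 ∪ p.2 = X ∧ Disjoint p.1 p.2 ∧ BundleConn G p.1 ∧ BundleConn G p.2}

/-- The pairwise maximin share of a bundle `X` with respect to utility `u`: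
the maximum over partitions of `X` into two connected bundles of the minimum utility. -/
noncomputable def pmms (G : SimpleGraph V) (u : Finset V → ℝ) (X : Finset V) : ℝ :=
  sSup ((fun p : Finset V × Finset V => min (u p.1) (u p.2)) '' Part2 G X)

/-- The `n`-agent maximin share of the whole vertex set: maximum over partitions of `V`
into `n` connected bundles of the minimum utility of a bundle. -/
noncomputable def mms (G : SimpleGraph V) (u : Finset V → ℝ) (n : ℕ) : ℝ :=
  sSup ((fun A : Fin n → Finset V => ⨅ i, u (A i)) '' {A | IsConnAlloc G A})

/-- Agents `i` and `j` are adjacent under allocation `A`. -/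
def AdjUnder (G : SimpleGraph V) {n : ℕ} (A : Fin n → Finset V) (i j : Fin n) : Prop :=
  ∃ v ∈ A i, ∃ w ∈ A j, G.Adj v w

/-- An allocation is `α`-PMMS if every agent with an empty bundle, and every agent with
respect to each of her neighbours, receives at least `α` times her pairwise maximin share. -/
def IsAlphaPMMS (G : SimpleGraph V) {n : ℕ} (u : Fin n → Finset V → ℝ)
    (A : Fin n → Finset V) (α : ℝ) : Prop :=
  ∀ i j : Fin n, i ≠ j → (A i = ∅ ∨ AdjUnder G A i j) →
    α * pmms G (u i) (A i ∪ A j) ≤ u i (A i)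

/-- An allocation is `α`-MMS if every agent receives at least `α` times her maximin share. -/
def IsAlphaMMS (G : SimpleGraph V) {n : ℕ} (u : Fin n → Finset V → ℝ)
    (A : Fin n → Finset V) (α : ℝ) : Prop :=
  ∀ i : Fin n, α * mms G (u i) n ≤ u i (A i)

/-- An additive (nonnegative) utility function. -/
def AdditiveUtil (u : Finset V → ℝ) : Prop :=
  (∀ X : Finset V, u X = ∑ v ∈ X, u {v}) ∧ ∀ v : V, 0 ≤ u {v}

/-- A binary additive utility function. -/
def BinaryAdditiveUtil (u : Finset V → ℝ) : Prop :=
  (∀ X : Finset V, u X = ∑ v ∈ X, u {v}) ∧ ∀ v : V, u {v} = 0 ∨ u {v} = 1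

/-- A monotone (nonnegative) utility function. -/
def MonotoneUtil (u : Finset V → ℝ) : Prop :=
  (∀ X Y : Finset V, X ⊆ Y → u X ≤ u Y) ∧ 0 ≤ u ∅

/-- An allocation is `α`-EF1. -/
def IsAlphaEF1 {n : ℕ} (u : Fin n → Finset V → ℝ) (A : Fin n → Finset V) (α : ℝ) : Prop :=
  ∀ i j : Fin n, i ≠ j → A j ≠ ∅ → ∃ v ∈ A j, α * u i ((A j).erase v) ≤ u i (A i)

/-- An allocation is EFX (envy-free up to any item). -/
def IsEFX {n : ℕ} (u : Fin n → Finset V → ℝ) (A : Fin n → Finset V) : Prop :=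
  ∀ i j : Fin n, i ≠ j → A j ≠ ∅ → ∀ v ∈ A j, u i ((A j).erase v) ≤ u i (A i)

/-- The number of agents receiving positive utility. -/
noncomputable def nashCount {n : ℕ} (u : Fin n → Finset V → ℝ) (A : Fin n → Finset V) : ℕ :=
  (Finset.univ.filter fun i : Fin n => 0 < u i (A i)).card

/-- The product of the positive utilities. -/
noncomputable def nashProd {n : ℕ} (u : Fin n → Finset V → ℝ) (A : Fin n → Finset V) : ℝ :=
  ∏ i ∈ Finset.univ.filter (fun i : Fin n => 0 < u i (A i)), u i (A i)

/-- A maximum Nash welfare (MNW) connected allocation: maximizes the number of agents with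
positive utility and, subject to that, the product of the positive utilities. -/
def IsMNW (G : SimpleGraph V) {n : ℕ} (u : Fin n → Finset V → ℝ)
    (A : Fin n → Finset V) : Prop :=
  IsConnAlloc G A ∧
  (∀ B : Fin n → Finset V, IsConnAlloc G B → nashCount u B ≤ nashCount u A) ∧
  (∀ B : Fin n → Finset V, IsConnAlloc G B →
    nashCount u B = nashCount u A → nashProd u B ≤ nashProd u A)

/-- `A'` is a Pareto-improvement of `A`. -/
def ParetoImproves {n : ℕ} (u : Fin n → Finset V → ℝ) (A' A : Fin n → Finset V) : Prop :=
  (∀ i, u i (A i) ≤ u i (A' i)) ∧ ∃ j, u j (A j) < u j (A' j)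

/-- A connected allocation is Pareto-optimal if no connected allocation Pareto-improves it. -/
def IsParetoOptimal (G : SimpleGraph V) {n : ℕ} (u : Fin n → Finset V → ℝ)
    (A : Fin n → Finset V) : Prop :=
  ∀ B : Fin n → Finset V, IsConnAlloc G B → ¬ ParetoImproves u B A

/-- The vector of agents' utilities rearranged in increasing order. -/
noncomputable def sortedUtils {n : ℕ} (u : Fin n → Finset V → ℝ)
    (A : Fin n → Finset V) : List ℝ :=
  (((Finset.univ : Finset (Fin n)).val.map fun i => u i (A i)).sort (· ≤ ·))

/-- `A'` is a leximin improvement of `A`: the sorted utility vector of `A'` is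
lexicographically greater than that of `A`. -/
def LeximinImproves {n : ℕ} (u : Fin n → Finset V → ℝ) (A' A : Fin n → Finset V) : Prop :=
  List.Lex (· < ·) (sortedUtils u A) (sortedUtils u A')

/-- A connected leximin allocation. -/
def IsLeximin (G : SimpleGraph V) {n : ℕ} (u : Fin n → Finset V → ℝ)
    (A : Fin n → Finset V) : Prop :=
  IsConnAlloc G A ∧ ∀ B : Fin n → Finset V, IsConnAlloc G B → ¬ LeximinImproves u B A

/-- `G` is a star: there is a central vertex adjacent to exactly all other vertices. -/
def IsStar (G : SimpleGraph V) : Prop :=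
  ∃ c : V, ∀ a b : V, G.Adj a b ↔ a ≠ b ∧ (a = c ∨ b = c)

/-- A submodular utility function. -/
def SubmodularUtil (u : Finset V → ℝ) : Prop :=
  ∀ X Y : Finset V, u (X ∪ Y) + u (X ∩ Y) ≤ u X + u Y

/-- A utility function with binary marginal gains (and `u ∅ = 0`). -/
def BinaryMarginalGains (u : Finset V → ℝ) : Prop :=
  u ∅ = 0 ∧ ∀ (X : Finset V) (v : V),
    u (insert v X) - u X = 0 ∨ u (insert v X) - u X = 1

/-- On the path with `m` vertices (edges numbered `1, …, m-1` from left to right),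
`itv m x y` is the bundle `[x, y]` of all vertices between positions `x` and `y`. -/
def itv (m x y : ℕ) : Finset (Fin m) :=
  Finset.univ.filter fun v : Fin m => x ≤ v.val ∧ v.val < y

end GraphFair

namespace GraphFair

set_option linter.unusedSectionVars false in
lemma mnw_key {V : Type*} [DecidableEq V] (G : SimpleGraph V) {n : ℕ}
    (u : Fin n → Finset V → ℝ) (hu : ∀ i, AdditiveUtil (u i))
    (A : Fin n → Finset V) (hA : IsMNW G u A)
    (i j : Fin n) (hij : i ≠ j) (P Q : Finset V)
    (hcov : P ∪ Q = A i ∪ A j) (hdisjPQ : Disjoint P Q)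
    (hcP : BundleConn G P) (hcQ : BundleConn G Q)
    (hP : 2 * u i (A i) < u i P) (hQ : u j (A j) ≤ 2 * u j Q) : False := by
  classical
  set B : Fin n → Finset V := Function.update (Function.update A i P) j Q with hBdef
  have hBi : B i = P := by
    simp [hBdef, Function.update_apply, hij]
  have hBj : B j = Q := by
    simp [hBdef, Function.update_apply]
  have hBk : ∀ k : Fin n, k ≠ i → k ≠ j → B k = A k := by
    intro k hki hkj
    simp [hBdef, Function.update_apply, hki, hkj]
  have hPsub : P ⊆ A i ∪ A j := hcov ▸ Finset.subset_union_left
  have hQsub : Q ⊆ A i ∪ A j := hcov ▸ Finset.subset_union_right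
  have hD : ∀ k : Fin n, k ≠ i → k ≠ j → Disjoint (A k) (A i ∪ A j) := by
    intro k hki hkj
    exact Finset.disjoint_union_right.2 ⟨hA.1.2.1 k i hki, hA.1.2.1 k j hkj⟩
  -- B is a connected allocation
  have hB : IsConnAlloc G B := by
    refine ⟨?_, ?_, ?_⟩
    · intro v
      obtain ⟨k, hk⟩ := hA.1.1 v
      by_cases hki : k = i
      · have : v ∈ P ∪ Q := hcov ▸ Finset.mem_union_left _ (hki ▸ hk)
        rcases Finset.mem_union.1 this with h | h
        · exact ⟨i, hBi ▸ h⟩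
        · exact ⟨j, hBj ▸ h⟩
      · by_cases hkj : k = j
        · have : v ∈ P ∪ Q := hcov ▸ Finset.mem_union_right _ (hkj ▸ hk)
          rcases Finset.mem_union.1 this with h | h
          · exact ⟨i, hBi ▸ h⟩
          · exact ⟨j, hBj ▸ h⟩
        · exact ⟨k, (hBk k hki hkj) ▸ hk⟩
    · intro k l hkl
      have hBki : ∀ m : Fin n, m ≠ i → m ≠ j → Disjoint (A m) P :=
        fun m h1 h2 => (hD m h1 h2).mono_right hPsub
      have hBkj : ∀ m : Fin n, m ≠ i → m ≠ j → Disjoint (A m) Q :=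
        fun m h1 h2 => (hD m h1 h2).mono_right hQsub
      by_cases hki : k = i
      · rw [hki, hBi]
        by_cases hlj : l = j
        · rw [hlj, hBj]; exact hdisjPQ
        · have hli : l ≠ i := fun h => hkl (hki.trans h.symm)
          rw [hBk l hli hlj]
          exact ((hBki l hli hlj)).symm
      · by_cases hkj : k = j
        · rw [hkj, hBj]
          by_cases hli : l = i
          · rw [hli, hBi]; exact hdisjPQ.symm
          · have hlj : l ≠ j := fun h => hkl (hkj.trans h.symm)
            rw [hBk l hli hlj]
            exact ((hBkj l hli hlj)).symm
        · rw [hBk k hki hkj]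
          by_cases hli : l = i
          · rw [hli, hBi]; exact hBki k hki hkj
          · by_cases hlj : l = j
            · rw [hlj, hBj]; exact hBkj k hki hkj
            · rw [hBk l hli hlj]; exact hA.1.2.1 k l hkl
    · intro k
      by_cases hki : k = i
      · rw [hki, hBi]; exact hcP
      · by_cases hkj : k = j
        · rw [hkj, hBj]; exact hcQ
        · rw [hBk k hki hkj]; exact hA.1.2.2 k
  set TA := Finset.univ.filter (fun k : Fin n => 0 < u k (A k)) with hTA
  set TB := Finset.univ.filter (fun k : Fin n => 0 < u k (B k)) with hTB
  have hsub : TA ⊆ TB := by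
    intro k hk
    rw [hTA, Finset.mem_filter] at hk
    rw [hTB, Finset.mem_filter]
    refine ⟨Finset.mem_univ _, ?_⟩
    by_cases hki : k = i
    · subst hki; rw [hBi]; linarith [hk.2]
    · by_cases hkj : k = j
      · subst hkj; rw [hBj]; linarith [hk.2]
      · rw [hBk k hki hkj]; exact hk.2
  have hcountB : nashCount u B ≤ nashCount u A := hA.2.1 B hB
  have hTeq : TA = TB :=
    Finset.eq_of_subset_of_card_le hsub hcountB
  have hceq : nashCount u B = nashCount u A := by
    unfold nashCount
    rw [← hTA, ← hTB, hTeq]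
  have hprodle : nashProd u B ≤ nashProd u A := hA.2.2 B hB hceq
  have hAnn : 0 ≤ u i (A i) := by
    rw [(hu i).1]; exact Finset.sum_nonneg fun v _ => (hu i).2 v
  have hiP : 0 < u i P := by linarith
  have hi : 0 < u i (A i) := by
    by_contra hi0
    have hiB : i ∈ TB := by
      rw [hTB, Finset.mem_filter]; exact ⟨Finset.mem_univ _, by rw [hBi]; exact hiP⟩
    rw [← hTeq, hTA, Finset.mem_filter] at hiB
    exact hi0 hiB.2
  have hiTA : i ∈ TA := by rw [hTA, Finset.mem_filter]; exact ⟨Finset.mem_univ _, hi⟩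
  have hpos : ∀ k ∈ TA, 0 < u k (A k) := by
    intro k hk; rw [hTA, Finset.mem_filter] at hk; exact hk.2
  have hprodA : nashProd u A = ∏ k ∈ TA, u k (A k) := by rw [nashProd, hTA]
  have hprodB : nashProd u B = ∏ k ∈ TA, u k (B k) := by rw [nashProd, ← hTB, ← hTeq]
  by_cases hj : 0 < u j (A j)
  · have hjTA : j ∈ TA := by rw [hTA, Finset.mem_filter]; exact ⟨Finset.mem_univ _, hj⟩
    have hjTA' : j ∈ TA.erase i := Finset.mem_erase.2 ⟨hij.symm, hjTA⟩
    set T' := (TA.erase i).erase j with hT'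
    have hsplitA : ∏ k ∈ TA, u k (A k)
        = u i (A i) * (u j (A j) * ∏ k ∈ T', u k (A k)) := by
      rw [← Finset.mul_prod_erase _ _ hiTA, ← Finset.mul_prod_erase _ _ hjTA']
    have hsplitB : ∏ k ∈ TA, u k (B k)
        = u i P * (u j Q * ∏ k ∈ T', u k (B k)) := by
      rw [← Finset.mul_prod_erase _ _ hiTA, ← Finset.mul_prod_erase _ _ hjTA', hBi, hBj]
    have hsame : ∏ k ∈ T', u k (B k) = ∏ k ∈ T', u k (A k) := by
      apply Finset.prod_congr rfl
      intro k hk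
      rw [hT', Finset.mem_erase, Finset.mem_erase] at hk
      rw [hBk k hk.2.1 hk.1]
    have hT'pos : 0 < ∏ k ∈ T', u k (A k) := by
      apply Finset.prod_pos
      intro k hk
      exact hpos k (Finset.mem_of_mem_erase (Finset.mem_of_mem_erase hk))
    have hjQ : 0 < u j Q := by linarith
    have hkey : u i (A i) * u j (A j) < u i P * u j Q := by nlinarith
    have : nashProd u A < nashProd u B := by
      rw [hprodA, hprodB, hsplitA, hsplitB, hsame]
      calc u i (A i) * (u j (A j) * ∏ k ∈ T', u k (A k))
          = (u i (A i) * u j (A j)) * ∏ k ∈ T', u k (A k) := by ring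
        _ < (u i P * u j Q) * ∏ k ∈ T', u k (A k) :=
            mul_lt_mul_of_pos_right hkey hT'pos
        _ = u i P * (u j Q * ∏ k ∈ T', u k (A k)) := by ring
    linarith
  · have hjTA : j ∉ TA := by
      rw [hTA, Finset.mem_filter]; push_neg; intro _; exact le_of_not_gt hj
    set T' := TA.erase i with hT'
    have hsplitA : ∏ k ∈ TA, u k (A k) = u i (A i) * ∏ k ∈ T', u k (A k) :=
      (Finset.mul_prod_erase _ _ hiTA).symm
    have hsplitB : ∏ k ∈ TA, u k (B k) = u i P * ∏ k ∈ T', u k (B k) := by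
      rw [← Finset.mul_prod_erase _ _ hiTA, hBi]
    have hsame : ∏ k ∈ T', u k (B k) = ∏ k ∈ T', u k (A k) := by
      apply Finset.prod_congr rfl
      intro k hk
      rw [hT', Finset.mem_erase] at hk
      have hkj : k ≠ j := fun h => hjTA (h ▸ hk.2)
      rw [hBk k hk.1 hkj]
    have hT'pos : 0 < ∏ k ∈ T', u k (A k) := by
      apply Finset.prod_pos
      intro k hk
      exact hpos k (Finset.mem_of_mem_erase hk)
    have : nashProd u A < nashProd u B := by
      rw [hprodA, hprodB, hsplitA, hsplitB, hsame]
      apply mul_lt_mul_of_pos_right _ hT'pos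
      linarith
    linarith

end GraphFair

open GraphFair in
/-- For a connected simple graph `G` and `n` agents with additive utility
functions, every maximum Nash welfare (MNW) connected allocation is `(1/2)`-PMMS. -/
theorem mnw_is_half_pmms {V : Type*} [DecidableEq V]
    (G : SimpleGraph V) (hG : G.Connected)
    {n : ℕ} (u : Fin n → Finset V → ℝ) (hu : ∀ i, AdditiveUtil (u i))
    (A : Fin n → Finset V) (hA : IsMNW G u A) :
    IsAlphaPMMS G u A (1 / 2) := by
  classical
  intro i j hij _
  by_contra h
  push_neg at h
  have hnn : 0 ≤ u i (A i) := by
    rw [(hu i).1]; exact Finset.sum_nonneg fun v _ => (hu i).2 v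
  have hex : ∃ p ∈ Part2 G (A i ∪ A j), 2 * u i (A i) < min (u i p.1) (u i p.2) := by
    by_contra hc
    push_neg at hc
    have : pmms G (u i) (A i ∪ A j) ≤ 2 * u i (A i) := by
      apply Real.sSup_le
      · rintro x ⟨p, hp, rfl⟩; exact hc p hp
      · linarith
    linarith
  obtain ⟨⟨Y, Z⟩, ⟨hcov, hdisj, hcY, hcZ⟩, hmin⟩ := hex
  simp only [lt_min_iff] at hmin
  have hjsum : u j (A j) ≤ u j Y + u j Z := by
    have h1 : A j ⊆ Y ∪ Z := hcov.symm ▸ Finset.subset_union_right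
    have h2 : u j (A j) ≤ u j (Y ∪ Z) := by
      rw [(hu j).1, (hu j).1]
      exact Finset.sum_le_sum_of_subset_of_nonneg h1 fun v _ _ => (hu j).2 v
    have h3 : u j (Y ∪ Z) = u j Y + u j Z := by
      rw [(hu j).1, (hu j).1 Y, (hu j).1 Z, Finset.sum_union hdisj]
    linarith
  rcases le_total (u j Y) (u j Z) with hYZ | hYZ
  · exact mnw_key G u hu A hA i j hij Y Z hcov hdisj hcY hcZ hmin.1 (by linarith)
  · exact mnw_key G u hu A hA i j hij Z Y (Finset.union_comm Y Z ▸ hcov) hdisj.symm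
      hcZ hcY hmin.2 (by linarith)
end

section
/- For a connected simple graph G and n agents with additive utility functions, there exists a connected allocation that is both Pareto-optimal (among connected allocations) and (1/2)-PMMS. -/
open GraphFair in
/-- For a connected simple graph `G` and `n` agents with additive utility
functions, there exists a connected allocation that is both Pareto-optimal (among
connected allocations) and `(1/2)`-PMMS. -/
theorem exists_pareto_optimal_half_pmms {V : Type*} [Fintype V] [DecidableEq V]
    (G : SimpleGraph V) (hG : G.Connected)
    {n : ℕ} (hn : 0 < n) (u : Fin n → Finset V → ℝ) (hu : ∀ i, AdditiveUtil (u i)) :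
    ∃ A : Fin n → Finset V,
      IsConnAlloc G A ∧ IsParetoOptimal G u A ∧ IsAlphaPMMS G u A (1 / 2) := by
  classical
  -- basic facts about additive utilities
  have unn : ∀ i (X : Finset V), 0 ≤ u i X := by
    intro i X
    rw [(hu i).1]
    exact Finset.sum_nonneg fun v _ => (hu i).2 v
  have umono : ∀ i (X Y : Finset V), X ⊆ Y → u i X ≤ u i Y := by
    intro i X Y hXY
    rw [(hu i).1, (hu i).1]
    exact Finset.sum_le_sum_of_subset_of_nonneg hXY fun v _ _ => (hu i).2 v
  have uunion : ∀ i (X Y : Finset V), Disjoint X Y → u i (X ∪ Y) = u i X + u i Y := by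
    intro i X Y hd
    rw [(hu i).1, (hu i).1, (hu i).1]
    exact Finset.sum_union hd
  -- a connected allocation exists
  have hVne : Nonempty V := hG.nonempty
  set i0 : Fin n := ⟨0, hn⟩ with hi0
  have hA0 : IsConnAlloc G (fun k => if k = i0 then (Finset.univ : Finset V) else ∅) := by
    refine ⟨fun v => ⟨i0, by simp⟩, ?_, ?_⟩
    · intro k l hkl
      by_cases hk : k = i0 <;> by_cases hl : l = i0 <;>
        simp_all [Finset.disjoint_left]
    · intro k
      by_cases hk : k = i0
      · right
        show (SimpleGraph.induce (((if k = i0 then (Finset.univ : Finset V) else ∅) :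
          Finset V) : Set V) G).Connected
        rw [if_pos hk, Finset.coe_univ]
        exact (SimpleGraph.Iso.connected_iff (SimpleGraph.induceUnivIso G)).mpr hG
      · left; simp [hk]
  -- pick an MNW allocation by finite maximization
  set T : Finset (Fin n → Finset V) := Finset.univ.filter (fun A => IsConnAlloc G A) with hT
  have hTne : T.Nonempty :=
    ⟨fun k => if k = i0 then (Finset.univ : Finset V) else ∅, by
      simp only [hT, Finset.mem_filter, Finset.mem_univ, true_and]; exact hA0⟩
  obtain ⟨A1, hA1T, hA1max⟩ := T.exists_max_image (fun A => nashCount u A) hTne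
  set T2 : Finset (Fin n → Finset V) :=
    T.filter (fun B => nashCount u B = nashCount u A1) with hT2
  have hT2ne : T2.Nonempty := ⟨A1, by simp [hT2, hA1T]⟩
  obtain ⟨A, hAT2, hAmax⟩ := T2.exists_max_image (fun A => nashProd u A) hT2ne
  have hAT : A ∈ T := (Finset.mem_filter.mp hAT2).1
  have hAcnt : nashCount u A = nashCount u A1 := (Finset.mem_filter.mp hAT2).2
  have hconn : IsConnAlloc G A := (Finset.mem_filter.mp hAT).2
  have hcount : ∀ B, IsConnAlloc G B → nashCount u B ≤ nashCount u A := by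
    intro B hB
    rw [hAcnt]
    exact hA1max B (by simp [hT, hB])
  have hprod : ∀ B, IsConnAlloc G B → nashCount u B = nashCount u A →
      nashProd u B ≤ nashProd u A := by
    intro B hB hBc
    exact hAmax B (by simp [hT2, hT, hB, hBc ▸ hAcnt])
  refine ⟨A, hconn, ?_, ?_⟩
  · -- Pareto optimality
    rintro B hB ⟨hle, j, hj⟩
    have hsub : (Finset.univ.filter fun k : Fin n => 0 < u k (A k)) ⊆
        (Finset.univ.filter fun k : Fin n => 0 < u k (B k)) := by
      intro k hk
      simp only [Finset.mem_filter, Finset.mem_univ, true_and] at hk ⊢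
      exact lt_of_lt_of_le hk (hle k)
    have hcard := hcount B hB
    unfold nashCount at hcard
    have hSeq := Finset.eq_of_subset_of_card_le hsub hcard
    have hjB : j ∈ (Finset.univ.filter fun k : Fin n => 0 < u k (B k)) := by
      simp only [Finset.mem_filter, Finset.mem_univ, true_and]
      exact lt_of_le_of_lt (unn j (A j)) hj
    have hjA : 0 < u j (A j) := by
      rw [← hSeq] at hjB
      simpa using hjB
    -- product contradiction
    have hpr := hprod B hB (by unfold nashCount; rw [hSeq])
    unfold nashProd at hpr
    rw [← hSeq] at hpr
    set S := Finset.univ.filter fun k : Fin n => 0 < u k (A k) with hS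
    have hjS : j ∈ S := by simp [hS, hjA]
    have hposA : ∀ k ∈ S, 0 < u k (A k) := by
      intro k hk; simpa [hS] using hk
    have hPle : ∏ k ∈ S.erase j, u k (A k) ≤ ∏ k ∈ S.erase j, u k (B k) :=
      Finset.prod_le_prod (fun k hk => (hposA k (Finset.mem_of_mem_erase hk)).le)
        (fun k _ => hle k)
    have hPpos : 0 < ∏ k ∈ S.erase j, u k (A k) :=
      Finset.prod_pos fun k hk => hposA k (Finset.mem_of_mem_erase hk)
    have hlt : ∏ k ∈ S, u k (A k) < ∏ k ∈ S, u k (B k) := by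
      rw [← Finset.mul_prod_erase S (fun k => u k (A k)) hjS,
        ← Finset.mul_prod_erase S (fun k => u k (B k)) hjS]
      calc u j (A j) * ∏ k ∈ S.erase j, u k (A k)
          < u j (B j) * ∏ k ∈ S.erase j, u k (A k) :=
            mul_lt_mul_of_pos_right hj hPpos
        _ ≤ u j (B j) * ∏ k ∈ S.erase j, u k (B k) :=
            mul_le_mul_of_nonneg_left hPle (unn j (B j))
    exact absurd hpr (not_le.mpr hlt)
  · -- (1/2)-PMMS
    intro i j hij _
    by_contra hcon
    push_neg at hcon
    set X := A i ∪ A j with hX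
    have h2u : 2 * u i (A i) < pmms G (u i) X := by
      have := hcon
      unfold X at this ⊢
      linarith
    set s := ((fun p : Finset V × Finset V => min (u i p.1) (u i p.2)) '' Part2 G X)
      with hs
    have hpmms : pmms G (u i) X = sSup s := rfl
    have hsne : s.Nonempty := by
      by_contra h
      rw [Set.not_nonempty_iff_eq_empty] at h
      rw [hpmms, h, Real.sSup_empty] at h2u
      have := unn i (A i)
      linarith
    rw [hpmms] at h2u
    obtain ⟨m, ⟨p, hp, rfl⟩, hm⟩ := exists_lt_of_lt_csSup hsne h2u
    obtain ⟨hpu, hpd, hpc1, hpc2⟩ := hp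
    -- choose which part goes to i and which to j
    obtain ⟨Y, Z, hYZu, hYZd, hYc, hZc, hYi, hZj⟩ :
        ∃ Y Z : Finset V, Y ∪ Z = X ∧ Disjoint Y Z ∧ BundleConn G Y ∧ BundleConn G Z ∧
          2 * u i (A i) < u i Y ∧ u j (A j) ≤ 2 * u j Z := by
      have hjX : u j (A j) ≤ u j X := umono j _ _ (by simp [hX])
      have hsum : u j p.1 + u j p.2 = u j X := by
        rw [← uunion j p.1 p.2 hpd, hpu]
      rcases le_total (u j p.1) (u j p.2) with h | h
      · exact ⟨p.1, p.2, hpu, hpd, hpc1, hpc2,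
          lt_of_lt_of_le hm (min_le_left _ _), by linarith⟩
      · exact ⟨p.2, p.1, by rw [Finset.union_comm]; exact hpu, hpd.symm, hpc2, hpc1,
          lt_of_lt_of_le hm (min_le_right _ _), by linarith⟩
    set B : Fin n → Finset V := fun k => if k = i then Y else if k = j then Z else A k
      with hB
    have hBi : B i = Y := by simp [hB]
    have hBj : B j = Z := by simp [hB, hij.symm]
    have hBk : ∀ k, k ≠ i → k ≠ j → B k = A k := by
      intro k h1 h2; simp [hB, h1, h2]
    have hXdisj : ∀ l, l ≠ i → l ≠ j → Disjoint X (A l) := by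
      intro l h1 h2
      rw [hX, Finset.disjoint_union_left]
      exact ⟨hconn.2.1 i l (Ne.symm h1), hconn.2.1 j l (Ne.symm h2)⟩
    have hYX : Y ⊆ X := hYZu ▸ Finset.subset_union_left
    have hZX : Z ⊆ X := hYZu ▸ Finset.subset_union_right
    have hBconn : IsConnAlloc G B := by
      refine ⟨?_, ?_, ?_⟩
      · intro v
        obtain ⟨k, hk⟩ := hconn.1 v
        by_cases h1 : k = i
        · have : v ∈ Y ∪ Z := by rw [hYZu, hX]; exact Finset.mem_union_left _ (h1 ▸ hk)
          rcases Finset.mem_union.mp this with h | h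
          · exact ⟨i, hBi ▸ h⟩
          · exact ⟨j, hBj ▸ h⟩
        by_cases h2 : k = j
        · have : v ∈ Y ∪ Z := by rw [hYZu, hX]; exact Finset.mem_union_right _ (h2 ▸ hk)
          rcases Finset.mem_union.mp this with h | h
          · exact ⟨i, hBi ▸ h⟩
          · exact ⟨j, hBj ▸ h⟩
        · exact ⟨k, (hBk k h1 h2) ▸ hk⟩
      · intro k l hkl
        by_cases hk1 : k = i <;> by_cases hk2 : k = j <;>
          by_cases hl1 : l = i <;> by_cases hl2 : l = j
        all_goals subst_vars
        all_goals first
          | exact absurd rfl hkl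
          | exact absurd rfl hij
          | (rw [hBi, hBj]; exact hYZd)
          | (rw [hBj, hBi]; exact hYZd.symm)
          | (rw [hBi, hBk _ hl1 hl2]
             exact Finset.disjoint_of_subset_left hYX (hXdisj _ hl1 hl2))
          | (rw [hBj, hBk _ hl1 hl2]
             exact Finset.disjoint_of_subset_left hZX (hXdisj _ hl1 hl2))
          | (rw [hBk _ hk1 hk2, hBi]
             exact (Finset.disjoint_of_subset_left hYX (hXdisj _ hk1 hk2)).symm)
          | (rw [hBk _ hk1 hk2, hBj]
             exact (Finset.disjoint_of_subset_left hZX (hXdisj _ hk1 hk2)).symm)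
          | (rw [hBk _ hk1 hk2, hBk _ hl1 hl2]; exact hconn.2.1 _ _ hkl)
      · intro k
        by_cases h1 : k = i
        · rw [h1, hBi]; exact hYc
        by_cases h2 : k = j
        · rw [h2, hBj]; exact hZc
        · rw [hBk k h1 h2]; exact hconn.2.2 k
    -- filters
    set SA := Finset.univ.filter (fun k : Fin n => 0 < u k (A k)) with hSA
    set SB := Finset.univ.filter (fun k : Fin n => 0 < u k (B k)) with hSB
    have hiB : 0 < u i (B i) := by
      rw [hBi]; have := unn i (A i); linarith
    have hjhalf : u j (A j) ≤ 2 * u j (B j) := by rw [hBj]; exact hZj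
    have hsub : SA ⊆ SB := by
      intro k hk
      simp only [hSA, hSB, Finset.mem_filter, Finset.mem_univ, true_and] at hk ⊢
      by_cases h1 : k = i
      · exact h1 ▸ hiB
      by_cases h2 : k = j
      · subst h2; linarith
      · rw [hBk k h1 h2]; exact hk
    have hcard := hcount B hBconn
    unfold nashCount at hcard
    rw [← hSA, ← hSB] at hcard
    rcases (unn i (A i)).lt_or_eq with hiA | hiA
    · -- u i (A i) > 0 : product contradiction
      have hSeq : SA = SB := Finset.eq_of_subset_of_card_le hsub hcard
      have hpr := hprod B hBconn (by unfold nashCount; rw [← hSA, ← hSB, hSeq])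
      unfold nashProd at hpr
      rw [← hSA, ← hSB, ← hSeq] at hpr
      have hiS : i ∈ SA := by simp [hSA, hiA]
      have hposA : ∀ k ∈ SA, 0 < u k (A k) := by
        intro k hk; simpa [hSA] using hk
      have hlt : ∏ k ∈ SA, u k (A k) < ∏ k ∈ SA, u k (B k) := by
        by_cases hjS : j ∈ SA
        · have hjS' : j ∈ SA.erase i := Finset.mem_erase.mpr ⟨hij.symm, hjS⟩
          have hrest : ∏ k ∈ (SA.erase i).erase j, u k (A k)
              = ∏ k ∈ (SA.erase i).erase j, u k (B k) := by
            refine Finset.prod_congr rfl fun k hk => ?_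
            have hk2 := Finset.mem_erase.mp hk
            have hk1 := Finset.mem_erase.mp hk2.2
            rw [hBk k hk1.1 hk2.1]
          have hPpos : 0 < ∏ k ∈ (SA.erase i).erase j, u k (A k) :=
            Finset.prod_pos fun k hk =>
              hposA k (Finset.mem_of_mem_erase (Finset.mem_of_mem_erase hk))
          rw [← Finset.mul_prod_erase SA (fun k => u k (A k)) hiS,
            ← Finset.mul_prod_erase SA (fun k => u k (B k)) hiS,
            ← Finset.mul_prod_erase (SA.erase i) (fun k => u k (A k)) hjS',
            ← Finset.mul_prod_erase (SA.erase i) (fun k => u k (B k)) hjS', ← hrest]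
          have hjApos : 0 < u j (A j) := by simpa [hSA] using hjS
          have hij2 : u i (A i) * u j (A j) < u i (B i) * u j (B j) := by
            have h1 : 2 * u i (A i) < u i (B i) := hBi ▸ hYi
            nlinarith
          calc u i (A i) * (u j (A j) * ∏ k ∈ (SA.erase i).erase j, u k (A k))
              = u i (A i) * u j (A j) * ∏ k ∈ (SA.erase i).erase j, u k (A k) := by ring
            _ < u i (B i) * u j (B j) * ∏ k ∈ (SA.erase i).erase j, u k (A k) :=
                mul_lt_mul_of_pos_right hij2 hPpos
            _ = u i (B i) * (u j (B j) * ∏ k ∈ (SA.erase i).erase j, u k (A k)) := by ring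
        · have hrest : ∏ k ∈ SA.erase i, u k (A k) = ∏ k ∈ SA.erase i, u k (B k) := by
            refine Finset.prod_congr rfl fun k hk => ?_
            have hk1 := Finset.mem_erase.mp hk
            have hkj : k ≠ j := fun h => hjS (h ▸ hk1.2)
            rw [hBk k hk1.1 hkj]
          have hPpos : 0 < ∏ k ∈ SA.erase i, u k (A k) :=
            Finset.prod_pos fun k hk => hposA k (Finset.mem_of_mem_erase hk)
          rw [← Finset.mul_prod_erase SA (fun k => u k (A k)) hiS,
            ← Finset.mul_prod_erase SA (fun k => u k (B k)) hiS, ← hrest]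
          have h1 : u i (A i) < u i (B i) := by
            have := hBi ▸ hYi; linarith
          exact mul_lt_mul_of_pos_right h1 hPpos
      exact absurd hpr (not_le.mpr hlt)
    · -- u i (A i) = 0 : count contradiction
      have hiSA : i ∉ SA := by simp [hSA, ← hiA]
      have hiSB : i ∈ SB := by simp [hSB, hiB]
      have : SA ⊂ SB := Finset.ssubset_iff_of_subset hsub |>.mpr ⟨i, hiSB, hiSA⟩
      exact absurd hcard (not_le.mpr (Finset.card_lt_card this))
end

section
/- For a connected simple graph G and two agents with additive utility functions, there exists a connected allocation that is (3/4)-PMMS (equivalently, since PMMS and MMS coincide for two agents, (3/4)-MMS). -/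
namespace GraphFair

variable {V : Type*} {G : SimpleGraph V} {u : Finset V → ℝ}

theorem AdditiveUtil.nonneg (hu : AdditiveUtil u) (B : Finset V) : 0 ≤ u B := by
  rw [hu.1]
  exact Finset.sum_nonneg fun v _ => hu.2 v

theorem bundleConn_univ [Fintype V] (hG : G.Connected) : BundleConn G Finset.univ := by
  right
  rw [Finset.coe_univ]
  exact (SimpleGraph.induceUnivIso G).connected_iff.mpr hG

variable [DecidableEq V]

theorem AdditiveUtil.map_union (hu : AdditiveUtil u) {Y Z : Finset V} (h : Disjoint Y Z) :
    u (Y ∪ Z) = u Y + u Z := by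
  rw [hu.1, hu.1 Y, hu.1 Z, Finset.sum_union h]

theorem swap_mem_part2 {X : Finset V} {p : Finset V × Finset V} (hp : p ∈ Part2 G X) :
    p.swap ∈ Part2 G X :=
  ⟨by rw [Prod.fst_swap, Prod.snd_swap, Finset.union_comm]; exact hp.1,
    hp.2.1.symm, hp.2.2.2, hp.2.2.1⟩

theorem self_empty_mem_part2 {X : Finset V} (hX : BundleConn G X) : (X, ∅) ∈ Part2 G X :=
  ⟨Finset.union_empty X, Finset.disjoint_empty_right X, hX, Or.inl rfl⟩

theorem pmms_nonneg (hu : ∀ B, 0 ≤ u B) (X : Finset V) : 0 ≤ pmms G u X :=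
  Real.sSup_nonneg <| by
    rintro _ ⟨p, -, rfl⟩
    exact le_min (hu _) (hu _)

theorem pmms_le_half (hu : AdditiveUtil u) (X : Finset V) : pmms G u X ≤ u X / 2 := by
  refine Real.sSup_le ?_ (by linarith [hu.nonneg X])
  rintro _ ⟨p, hp, rfl⟩
  have hsum : u p.1 + u p.2 = u X := by rw [← hu.map_union hp.2.1, hp.1]
  linarith [min_le_left (u p.1) (u p.2), min_le_right (u p.1) (u p.2)]

theorem exists_mem_part2_min_eq_pmms [Fintype V] {X : Finset V} (hX : BundleConn G X) :
    ∃ p ∈ Part2 G X, min (u p.1) (u p.2) = pmms G u X :=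
  (Set.Nonempty.image _ ⟨_, self_empty_mem_part2 hX⟩).csSup_mem (Set.toFinite _)

theorem exists_mem_part2_cut_and_choose [Fintype V] {u₀ u₁ : Finset V → ℝ}
    (hu₁ : AdditiveUtil u₁) {X : Finset V} (hX : BundleConn G X) :
    ∃ Y Z, (Y, Z) ∈ Part2 G X ∧ pmms G u₀ X ≤ u₀ Y ∧ pmms G u₁ X ≤ u₁ Z := by
  obtain ⟨p, hp, hcut⟩ := exists_mem_part2_min_eq_pmms (u := u₀) hX
  have hhalf := pmms_le_half (G := G) hu₁ X
  have hsum : u₁ p.1 + u₁ p.2 = u₁ X := by rw [← hu₁.map_union hp.2.1, hp.1]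
  rcases le_total (u₁ p.1) (u₁ p.2) with h | h
  · exact ⟨p.1, p.2, hp, hcut ▸ min_le_left _ _, by linarith⟩
  · exact ⟨p.2, p.1, swap_mem_part2 hp, hcut ▸ min_le_right _ _, by linarith⟩

theorem isConnAlloc_pair [Fintype V] {Y Z : Finset V} (h : (Y, Z) ∈ Part2 G Finset.univ) :
    IsConnAlloc G ![Y, Z] := by
  refine ⟨fun v => ?_, fun i j hij => ?_, fun i => ?_⟩
  · rcases Finset.mem_union.mp (h.1 ▸ Finset.mem_univ v) with hv | hv
    exacts [⟨0, hv⟩, ⟨1, hv⟩]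
  · fin_cases i <;> fin_cases j
    exacts [absurd rfl hij, h.2.1, h.2.1.symm, absurd rfl hij]
  · fin_cases i
    exacts [h.2.2.1, h.2.2.2]

theorem isAlphaPMMS_pair {u : Fin 2 → Finset V → ℝ} {Y Z : Finset V} {α : ℝ}
    (h₀ : α * pmms G (u 0) (Y ∪ Z) ≤ u 0 Y) (h₁ : α * pmms G (u 1) (Z ∪ Y) ≤ u 1 Z) :
    IsAlphaPMMS G u ![Y, Z] α := by
  intro i j hij _
  fin_cases i <;> fin_cases j
  exacts [absurd rfl hij, h₀, h₁, absurd rfl hij]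

theorem IsAlphaPMMS.mono {n : ℕ} {u : Fin n → Finset V → ℝ} {A : Fin n → Finset V}
    {α β : ℝ} (hu : ∀ i B, 0 ≤ u i B) (hα : α ≤ β) (h : IsAlphaPMMS G u A β) :
    IsAlphaPMMS G u A α := fun i j hij hadj =>
  (mul_le_mul_of_nonneg_right hα (pmms_nonneg (hu i) _)).trans (h i j hij hadj)

end GraphFair

open GraphFair in
/-- For a connected simple graph `G` and two agents with additive utility
functions, there exists a connected allocation that is `(3/4)`-PMMS. -/
theorem exists_three_quarters_pmms_two_agents {V : Type*} [Fintype V] [DecidableEq V]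
    (G : SimpleGraph V) (hG : G.Connected)
    (u : Fin 2 → Finset V → ℝ) (hu : ∀ i, AdditiveUtil (u i)) :
    ∃ A : Fin 2 → Finset V, IsConnAlloc G A ∧ IsAlphaPMMS G u A (3 / 4) := by
  obtain ⟨Y, Z, hpart, h₀, h₁⟩ :=
    exists_mem_part2_cut_and_choose (u₀ := u 0) (hu 1) (bundleConn_univ hG)
  have hZY : Z ∪ Y = Finset.univ := by rw [Finset.union_comm, hpart.1]
  refine ⟨![Y, Z], isConnAlloc_pair hpart,
    IsAlphaPMMS.mono (β := 1) (fun i => (hu i).nonneg) (by norm_num) (isAlphaPMMS_pair ?_ ?_)⟩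
  · rwa [one_mul, hpart.1]
  · rwa [one_mul, hZY]
end

section
/- For a connected simple graph G and n agents sharing an identical utility function u, every connected leximin allocation is both PMMS and MMS; in particular, a connected allocation that is simultaneously PMMS and MMS exists. -/
/-! If a connected split `(Y, Z)` of `A i ∪ A j` gave both parts more than `u (A i)`, reassigning
`Y` and `Z` to `i` and `j` would be a leximin improvement; so would a connected allocation whose
minimum exceeds `u (A i)`. Both are instances of one fact about sorted multisets: removing a
sub-multiset that contains `a` and adding a nonempty one whose elements all exceed `a` makes the
sorted list lexicographically larger, as one sees by peeling off common least elements until the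
old side's least element is strictly smaller. A leximin allocation exists because there are
finitely many connected allocations and, `G` being connected, at least one: a single agent takes
everything. -/

namespace Multiset

variable {α : Type*} [LinearOrder α]

theorem exists_sort_eq_cons {s : Multiset α} (hs : s ≠ 0) :
    ∃ b ∈ s, (∀ x ∈ s, b ≤ x) ∧ s.sort = b :: (s.erase b).sort := by
  obtain ⟨b, hb, hmin⟩ := s.toFinset.exists_min_image id (by simpa using hs)
  simp only [mem_toFinset, id] at hb hmin
  refine ⟨b, hb, hmin, ?_⟩
  conv_lhs => rw [← cons_erase hb]
  exact sort_cons _ _ _ fun x hx => hmin x (mem_of_mem_erase hx)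

theorem lex_sort_cons_add_of_forall_lt {a : α} {t R : Multiset α} (hR : R ≠ 0)
    (haR : ∀ r ∈ R, a < r) (s : Multiset α) :
    List.Lex (· < ·) (a ::ₘ t + s).sort (R + s).sort := by
  induction s using strongInductionOn with
  | ih s ih =>
  obtain ⟨m, -, hm_le, hsort⟩ := exists_sort_eq_cons (s := a ::ₘ t + s) (by simp)
  obtain ⟨b, hb, hb_le, hsort'⟩ := exists_sort_eq_cons (s := R + s) (by simp [hR])
  by_cases hmb : m < b
  · rw [hsort, hsort']
    exact .rel hmb
  -- `b ≤ m ≤ a` keeps `b` out of `R`, so `b` is a common least element of both sides.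
  have hbm : b ≤ m := not_lt.mp hmb
  have hbs : b ∈ s := (mem_add.mp hb).resolve_left fun hbR =>
    (haR b hbR).not_ge (hbm.trans (hm_le a (by simp)))
  obtain ⟨s, rfl⟩ := exists_cons_of_mem hbs
  simp only [add_cons, forall_mem_cons] at hm_le hb_le ⊢
  rw [sort_cons _ _ _ hb_le.2, sort_cons _ _ _ fun x hx => hbm.trans (hm_le.2 x hx)]
  exact .cons (ih s (lt_cons_self s b))

end Multiset

theorem Finset.map_val_eq_cons_cons {ι β : Type*} [DecidableEq ι] {s : Finset ι} (f : ι → β)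
    {i j : ι} (hi : i ∈ s) (hj : j ∈ s) (hij : i ≠ j) :
    s.val.map f = f i ::ₘ f j ::ₘ ((s.erase i).erase j).val.map f := by
  rw [← Multiset.map_cons, ← Multiset.map_cons, erase_val, erase_val,
    Multiset.cons_erase ((Multiset.mem_erase_of_ne hij.symm).mpr hj), Multiset.cons_erase hi]

namespace GraphFair

open Finset Function

variable {V : Type*} {G : SimpleGraph V} {n : ℕ}

theorem IsConnAlloc.update_pair [DecidableEq V] {A : Fin n → Finset V} (hA : IsConnAlloc G A)
    {i j : Fin n} (hij : i ≠ j) {Y Z : Finset V} (hYZ : (Y, Z) ∈ Part2 G (A i ∪ A j)) :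
    IsConnAlloc G (update (update A i Y) j Z) := by
  obtain ⟨hcover, hdisjA, hconn⟩ := hA
  obtain ⟨hunion, hdisj, hYc, hZc⟩ := hYZ
  set B := update (update A i Y) j Z
  have hBi : B i = Y := by simp [B, hij]
  have hBj : B j = Z := by simp [B]
  have hB : ∀ t, t ≠ i → t ≠ j → B t = A t := fun t hti htj => by simp [B, hti, htj]
  refine ⟨fun v => ?_, fun s t hst => ?_, fun t => ?_⟩
  · by_cases hv : v ∈ A i ∪ A j
    · rcases mem_union.mp (hunion ▸ hv : v ∈ Y ∪ Z) with hv | hv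
      exacts [⟨i, hBi ▸ hv⟩, ⟨j, hBj ▸ hv⟩]
    obtain ⟨t, ht⟩ := hcover v
    have hti : t ≠ i := by rintro rfl; simp [ht] at hv
    have htj : t ≠ j := by rintro rfl; simp [ht] at hv
    exact ⟨t, hB t hti htj ▸ ht⟩
  · have hsub : ∀ s, s = i ∨ s = j → B s ⊆ A i ∪ A j := by
      rintro s (rfl | rfl)
      · exact hBi ▸ hunion ▸ subset_union_left
      · exact hBj ▸ hunion ▸ subset_union_right
    have hdisj_pair : ∀ s t, s ≠ t → (s = i ∨ s = j) → Disjoint (B s) (B t) := by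
      intro s t hst hs
      by_cases ht : t = i ∨ t = j
      · rcases hs with rfl | rfl <;> rcases ht with rfl | rfl <;> simp_all [disjoint_comm]
      push Not at ht
      rw [hB t ht.1 ht.2]
      exact disjoint_of_subset_left (hsub s hs)
        (disjoint_union_left.mpr ⟨hdisjA _ _ (Ne.symm ht.1), hdisjA _ _ (Ne.symm ht.2)⟩)
    by_cases hs : s = i ∨ s = j
    · exact hdisj_pair s t hst hs
    by_cases ht : t = i ∨ t = j
    · exact (hdisj_pair t s hst.symm ht).symm
    push Not at hs ht
    rw [hB s hs.1 hs.2, hB t ht.1 ht.2]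
    exact hdisjA s t hst
  · simp only [B, update_apply]
    split_ifs
    exacts [hZc, hYc, hconn t]

variable {u : Finset V → ℝ} {A : Fin n → Finset V}

theorem IsLeximin.pmms_le [DecidableEq V] (hA : IsLeximin G (fun _ => u) A) {i j : Fin n}
    (hij : i ≠ j) (hu : 0 ≤ u (A i)) : pmms G u (A i ∪ A j) ≤ u (A i) := by
  refine Real.sSup_le ?_ hu
  rintro _ ⟨⟨Y, Z⟩, hYZ, rfl⟩
  by_contra! hlt
  refine hA.2 _ (hA.1.update_pair hij hYZ) ?_
  have hrest : ∀ t ∈ (univ.erase i).erase j, u (update (update A i Y) j Z t) = u (A t) :=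
    fun t ht => by
      rw [mem_erase, mem_erase] at ht
      rw [update_of_ne ht.1, update_of_ne ht.2.1]
  unfold LeximinImproves sortedUtils
  rw [map_val_eq_cons_cons _ (mem_univ i) (mem_univ j) hij,
    map_val_eq_cons_cons _ (mem_univ i) (mem_univ j) hij,
    Multiset.map_congr rfl fun t ht => hrest t ht]
  simpa [hij] using Multiset.lex_sort_cons_add_of_forall_lt (t := {u (A j)}) (R := {u Y, u Z})
    (by simp) (by simpa using hlt) _

theorem IsLeximin.mms_le (hA : IsLeximin G (fun _ => u) A) {i : Fin n} (hu : 0 ≤ u (A i)) :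
    mms G u n ≤ u (A i) := by
  refine Real.sSup_le ?_ hu
  rintro _ ⟨C, hC, rfl⟩
  by_contra! hlt
  refine hA.2 C hC ?_
  have hC_gt : ∀ r ∈ univ.val.map fun t => u (C t), u (A i) < r := by
    simp only [Multiset.mem_map, mem_univ_val, true_and]
    rintro _ ⟨t, rfl⟩
    exact hlt.trans_le (ciInf_le (Finite.bddBelow_range _) t)
  unfold LeximinImproves sortedUtils
  rw [← Multiset.cons_erase (Multiset.mem_map_of_mem (fun t => u (A t)) (mem_univ_val i))]
  simpa only [add_zero] using Multiset.lex_sort_cons_add_of_forall_lt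
    (t := (univ.val.map fun t => u (A t)).erase (u (A i)))
    (Multiset.card_pos.mp (by simpa using i.pos)) hC_gt 0

theorem exists_isConnAlloc [Fintype V] (hG : G.Connected) (hn : 0 < n) :
    ∃ A : Fin n → Finset V, IsConnAlloc G A := by
  refine ⟨fun t => if t = ⟨0, hn⟩ then univ else ∅, fun v => ⟨⟨0, hn⟩, by simp⟩,
    fun s t hst => ?_, fun t => ?_⟩
  · by_cases hs : s = ⟨0, hn⟩
    · simp [hs, Ne.symm (hs ▸ hst)]
    · simp [hs]
  · by_cases ht : t = ⟨0, hn⟩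
    · subst ht
      right
      dsimp only
      rw [if_pos rfl, coe_univ]
      exact (SimpleGraph.induceUnivIso G).connected_iff.mpr hG
    · simp [BundleConn, ht]

theorem exists_isLeximin [Fintype V] (hG : G.Connected) (hn : 0 < n)
    (u : Fin n → Finset V → ℝ) : ∃ A, IsLeximin G u A := by
  obtain ⟨A₀, hA₀⟩ := exists_isConnAlloc hG hn
  obtain ⟨A, hA, hmax⟩ := Set.exists_max_image {A | IsConnAlloc G A} (sortedUtils u)
    (Set.toFinite _) ⟨A₀, hA₀⟩
  exact ⟨A, hA, fun B hB hlt => (hmax B hB).not_gt hlt⟩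

end GraphFair

open GraphFair in
/-- For a connected simple graph `G` and `n` agents sharing an identical
utility function `u`, every connected leximin allocation is both PMMS and MMS;
in particular, a connected allocation that is simultaneously PMMS and MMS exists. -/
theorem leximin_is_pmms_and_mms_identical {V : Type*} [Fintype V] [DecidableEq V]
    (G : SimpleGraph V) (hG : G.Connected)
    {n : ℕ} (hn : 0 < n) (u : Finset V → ℝ) (hu : ∀ X : Finset V, 0 ≤ u X) :
    (∀ A : Fin n → Finset V, IsLeximin G (fun _ => u) A →
      IsAlphaPMMS G (fun _ => u) A 1 ∧ IsAlphaMMS G (fun _ => u) A 1) ∧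
    ∃ A : Fin n → Finset V, IsConnAlloc G A ∧
      IsAlphaPMMS G (fun _ => u) A 1 ∧ IsAlphaMMS G (fun _ => u) A 1 := by
  have leximin_fair : ∀ A : Fin n → Finset V, IsLeximin G (fun _ => u) A →
      IsAlphaPMMS G (fun _ => u) A 1 ∧ IsAlphaMMS G (fun _ => u) A 1 := fun A hA =>
    ⟨fun i _ hij _ => (one_mul _).trans_le (hA.pmms_le hij (hu _)),
      fun _ => (one_mul _).trans_le (hA.mms_le (hu _))⟩
  obtain ⟨A, hA⟩ := exists_isLeximin hG hn (fun _ => u)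
  exact ⟨leximin_fair, A, hA.1, leximin_fair A hA⟩
end

section
/- For every α∈(0,1], there exists an instance consisting of a star graph and two agents with identical binary additive utilities such that no connected allocation is α-EF1. -/
/-!
Give every item value 1 on a star with `m + 2` vertices. A connected bundle avoiding the
centre is at most one leaf, so the agent not holding the centre has utility at most 1, while
the other bundle still has at least `m` items after removing any one of them. Choosing
`α * m > 1` rules out `α`-EF1.
-/

namespace GraphFair

variable {V : Type*}

def starGraph (c : V) : SimpleGraph V :=
  SimpleGraph.fromRel fun a _ => a = c

theorem isStar_starGraph (c : V) : IsStar (starGraph c) :=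
  ⟨c, fun _ _ => Iff.rfl⟩

theorem card_le_one_of_bundleConn_starGraph {c : V} {B : Finset V}
    (hB : BundleConn (starGraph c) B) (hc : c ∉ B) : B.card ≤ 1 := by
  rcases hB with rfl | hconn
  · simp
  refine Finset.card_le_one.mpr fun a ha b hb => ?_
  obtain ⟨w⟩ := hconn.preconnected ⟨a, ha⟩ ⟨b, hb⟩
  cases w with
  | nil => rfl
  | @cons _ x _ hadj _ =>
    rcases (show (starGraph c).Adj a x from hadj).2 with rfl | hx
    · exact absurd ha hc
    · exact absurd (hx ▸ x.2) hc

theorem binaryAdditiveUtil_card [DecidableEq V] :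
    BinaryAdditiveUtil (fun X : Finset V => (X.card : ℝ)) :=
  ⟨fun X => by simp, fun v => Or.inr (by simp)⟩

theorem IsConnAlloc.card_add_card [Fintype V] [DecidableEq V] {G : SimpleGraph V}
    {A : Fin 2 → Finset V} (hA : IsConnAlloc G A) {i j : Fin 2} (hij : i ≠ j) :
    (A i).card + (A j).card = Fintype.card V := by
  have hcover : A i ∪ A j = Finset.univ := by
    refine Finset.eq_univ_of_forall fun v => ?_
    obtain ⟨x, hx⟩ := hA.1 v
    have hx' : x = i ∨ x = j := by simp only [Fin.ext_iff, ne_eq] at hij ⊢; omega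
    rcases hx' with rfl | rfl <;> simp [hx]
  rw [← Finset.card_union_of_disjoint (hA.2.1 i j hij), hcover, Finset.card_univ]

end GraphFair

open GraphFair in
/-- For every `α ∈ (0, 1]`, there exists an instance consisting of a star
graph and two agents with identical binary additive utilities such that no connected
allocation is `α`-EF1. -/
theorem exists_star_no_alpha_ef1 :
    ∀ α : ℝ, 0 < α → α ≤ 1 →
      ∃ (k : ℕ) (G : SimpleGraph (Fin k)) (u : Finset (Fin k) → ℝ),
        IsStar G ∧ BinaryAdditiveUtil u ∧
        ∀ A : Fin 2 → Finset (Fin k), IsConnAlloc G A →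
          ¬ IsAlphaEF1 (fun _ => u) A α := by
  intro α hα _
  obtain ⟨m, hm⟩ := exists_nat_gt (1 / α)
  refine ⟨m + 2, starGraph 0, fun X => (X.card : ℝ), isStar_starGraph 0,
    binaryAdditiveUtil_card, fun A hA hEF1 => ?_⟩
  obtain ⟨i, hi⟩ := hA.1 0
  obtain ⟨j, hji⟩ := exists_ne i
  have hj : (A j).card ≤ 1 := card_le_one_of_bundleConn_starGraph (hA.2.2 j)
    (Finset.disjoint_left.mp (hA.2.1 i j hji.symm) hi)
  have hsum := hA.card_add_card hji.symm
  rw [Fintype.card_fin] at hsum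
  obtain ⟨v, hv, henvy⟩ := hEF1 j i hji (Finset.ne_empty_of_mem hi)
  have hrest : m ≤ ((A i).erase v).card := by
    rw [Finset.card_erase_of_mem hv]; omega
  have hαm : 1 < α * m := by rwa [div_lt_iff₀ hα, mul_comm] at hm
  have : α * m ≤ 1 := calc
    α * m ≤ α * ((A i).erase v).card := by gcongr
    _ ≤ (A j).card := henvy
    _ ≤ 1 := by exact_mod_cast hj
  linarith
end

section
/- For every α>0, there exists an instance consisting of a path graph and two agents with binary additive utilities such that no connected leximin allocation is α-PMMS. -/
/-!
Agent 0 values only the vertices `0` and `k` of the path `0, …, k + 2`; agent 1 values every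
vertex. Splitting the path after `k` gives both agents utility 2, so a leximin allocation gives
both agents at least 2. Then agent 0 holds `0` and `k`, hence by connectivity all of `[0, k]`,
and agent 1 is left with exactly `{k + 1, k + 2}`, next to agent 0. But agent 1's pairwise maximin
share of the whole path is `⌊(k + 3) / 2⌋`, which exceeds `2 / α` once `k` is large.
-/

namespace GraphFair

open Finset SimpleGraph

section Leximin

variable {V : Type*} {n : ℕ} {u : Fin n → Finset V → ℝ} {A B : Fin n → Finset V}

theorem mem_sortedUtils {x : ℝ} : x ∈ sortedUtils u A ↔ ∃ i, u i (A i) = x := by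
  simp [sortedUtils]

theorem leximinImproves_of_forall_lt (i : Fin n) (h : ∀ j, u i (A i) < u j (B j)) :
    LeximinImproves u B A := by
  unfold LeximinImproves
  rcases hsA : sortedUtils u A with _ | ⟨a, l⟩
  · simpa [hsA] using (mem_sortedUtils (u := u) (A := A)).2 ⟨i, rfl⟩
  rcases hsB : sortedUtils u B with _ | ⟨b, l'⟩
  · simpa [hsB] using (mem_sortedUtils (u := u) (A := B)).2 ⟨i, rfl⟩
  have ha : a ≤ u i (A i) := by
    have hsorted : (a :: l).Pairwise (· ≤ ·) := hsA ▸ Multiset.pairwise_sort _ _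
    have hmem : u i (A i) ∈ a :: l := hsA ▸ (mem_sortedUtils (u := u) (A := A)).2 ⟨i, rfl⟩
    rcases List.mem_cons.1 hmem with heq | hl
    · exact heq.ge
    · exact List.rel_of_pairwise_cons hsorted hl
  obtain ⟨j, rfl⟩ := (mem_sortedUtils (u := u) (A := B)).1 (hsB ▸ List.mem_cons_self)
  exact List.Lex.rel (ha.trans_lt (h j))

theorem IsLeximin.le_of_forall_le {G : SimpleGraph V} (hA : IsLeximin G u A)
    (hB : IsConnAlloc G B) {c : ℝ} (hc : ∀ j, c ≤ u j (B j)) (i : Fin n) : c ≤ u i (A i) := by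
  by_contra! h
  exact hA.2 B hB (leximinImproves_of_forall_lt i fun j => h.trans_le (hc j))

end Leximin

section Path

variable {m x y : ℕ}

theorem mem_of_walk_induce_pathGraph {s : Set (Fin m)} {a b : s}
    (w : ((pathGraph m).induce s).Walk a b) {v : Fin m} (hav : (a : Fin m) ≤ v)
    (hvb : v ≤ b) : v ∈ s := by
  induction w with
  | nil => exact le_antisymm hav hvb ▸ Subtype.prop _
  | @cons a c b hac _ ih =>
    by_cases hcv : (c : Fin m) ≤ v
    · exact ih hcv hvb
    · have hac : (a : Fin m).val + 1 = c ∨ (c : Fin m).val + 1 = a := pathGraph_adj.1 hac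
      obtain rfl : v = a := Fin.ext (by rw [Fin.le_def] at hav hcv; omega)
      exact a.2

theorem BundleConn.mem_of_le_of_le_pathGraph {A : Finset (Fin m)}
    (hA : BundleConn (pathGraph m) A) {p q v : Fin m} (hp : p ∈ A) (hq : q ∈ A) (hpv : p ≤ v)
    (hvq : v ≤ q) : v ∈ A := by
  rcases hA with rfl | hA
  · simp at hp
  · obtain ⟨w⟩ := hA.preconnected ⟨p, hp⟩ ⟨q, hq⟩
    exact mem_of_walk_induce_pathGraph w hpv hvq

theorem mem_itv {v : Fin m} : v ∈ itv m x y ↔ x ≤ v.val ∧ v.val < y := by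
  simp [itv]

theorem card_itv (hy : y ≤ m) : #(itv m x y) = y - x := by
  have himage : (itv m x y).image Fin.val = Ico x y := by
    ext j
    simp only [mem_image, mem_itv, mem_Ico]
    exact ⟨by rintro ⟨v, hv, rfl⟩; exact hv, fun hj => ⟨⟨j, by omega⟩, hj, rfl⟩⟩
  rw [← Nat.card_Ico, ← himage, card_image_of_injective _ Fin.val_injective]

theorem reachable_induce_itv {v w : Fin m} (hv : v ∈ itv m x y) (hw : w ∈ itv m x y)
    (hvw : v ≤ w) :
    ((pathGraph m).induce (itv m x y : Set (Fin m))).Reachable ⟨v, hv⟩ ⟨w, hw⟩ := by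
  obtain ⟨d, hd⟩ : ∃ d, w.val = v.val + d := ⟨w - v, by rw [Fin.le_def] at hvw; omega⟩
  induction d generalizing w with
  | zero => obtain rfl : w = v := Fin.ext hd; rfl
  | succ d ih =>
    let w' : Fin m := ⟨v.val + d, by omega⟩
    have hw' : w' ∈ itv m x y := by
      rw [mem_itv] at hv hw ⊢
      simp only [w']
      omega
    refine (ih hw' (by simp [Fin.le_def, w']) rfl).trans (Adj.reachable ?_)
    change (pathGraph m).Adj w' w
    simp only [pathGraph_adj, w']
    omega

theorem bundleConn_itv : BundleConn (pathGraph m) (itv m x y) := by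
  rcases (itv m x y).eq_empty_or_nonempty with h | ⟨v₀, hv₀⟩
  · exact Or.inl h
  refine Or.inr ((connected_iff _).2 ⟨fun v w => ?_, ⟨⟨v₀, hv₀⟩⟩⟩)
  rcases le_total (v : Fin m) w with h | h
  · exact reachable_induce_itv v.2 w.2 h
  · exact (reachable_induce_itv w.2 v.2 h).symm

theorem itv_union_itv (k : ℕ) : itv m 0 k ∪ itv m k m = univ := by
  ext v
  simp only [mem_union, mem_itv, mem_univ, iff_true]
  omega

theorem disjoint_itv_itv {k : ℕ} : Disjoint (itv m x k) (itv m k y) := by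
  refine Finset.disjoint_left.2 fun v hv hv' => ?_
  rw [mem_itv] at hv hv'
  omega

theorem isConnAlloc_itv_split (k : ℕ) :
    IsConnAlloc (pathGraph m) ![itv m 0 k, itv m k m] := by
  refine ⟨fun v => ?_, fun i j hij => ?_, fun i => ?_⟩
  · rcases mem_union.1 (itv_union_itv k ▸ mem_univ v) with h | h
    exacts [⟨0, h⟩, ⟨1, h⟩]
  · fin_cases i <;> fin_cases j
    exacts [absurd rfl hij, disjoint_itv_itv, disjoint_itv_itv.symm, absurd rfl hij]
  · fin_cases i <;> exact bundleConn_itv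

end Path

section Utility

variable {V : Type*} [DecidableEq V]

def countUtil (S X : Finset V) : ℝ := #(X ∩ S)

theorem binaryAdditiveUtil_countUtil (S : Finset V) : BinaryAdditiveUtil (countUtil S) := by
  have hsingle : ∀ v, countUtil S {v} = if v ∈ S then 1 else 0 := fun v => by
    by_cases hv : v ∈ S <;> simp [countUtil, hv]
  refine ⟨fun X => ?_, fun v => ?_⟩
  · rw [sum_congr rfl fun v _ => hsingle v, sum_boole, filter_mem_eq_inter]
    rfl
  · rw [hsingle]
    split_ifs <;> simp

theorem countUtil_univ [Fintype V] (X : Finset V) : countUtil univ X = #X := by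
  simp [countUtil]

theorem min_le_pmms [Finite V] {G : SimpleGraph V} {u : Finset V → ℝ} {X : Finset V}
    {p : Finset V × Finset V} (hp : p ∈ Part2 G X) : min (u p.1) (u p.2) ≤ pmms G u X :=
  le_csSup (Set.toFinite _).bddAbove ⟨p, hp, rfl⟩

end Utility

theorem half_le_pmms_pathGraph (m : ℕ) :
    ((m / 2 : ℕ) : ℝ) ≤ pmms (pathGraph m) (countUtil univ) univ := by
  have hsplit : (itv m 0 (m / 2), itv m (m / 2) m) ∈ Part2 (pathGraph m) univ :=
    ⟨itv_union_itv _, disjoint_itv_itv, bundleConn_itv, bundleConn_itv⟩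
  refine le_trans ?_ (min_le_pmms hsplit)
  simp only [countUtil_univ, card_itv (Nat.div_le_self m 2), card_itv le_rfl]
  exact le_min (by simp) (by exact_mod_cast Nat.le_sub_of_add_le (by omega))

section Counterexample

variable {k : ℕ} {A : Fin 2 → Finset (Fin (k + 3))}

def gapUtil (k : ℕ) : Fin 2 → Finset (Fin (k + 3)) → ℝ :=
  ![countUtil {0, ⟨k, by omega⟩}, countUtil univ]

theorem two_le_gapUtil_of_isLeximin (hk : 1 ≤ k)
    (hA : IsLeximin (pathGraph (k + 3)) (gapUtil k) A) (i : Fin 2) : 2 ≤ gapUtil k i (A i) := by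
  refine hA.le_of_forall_le (isConnAlloc_itv_split (k + 1)) (Fin.forall_fin_two.2 ⟨?_, ?_⟩) i
  · have hsub : ({0, ⟨k, by omega⟩} : Finset (Fin (k + 3))) ⊆ itv (k + 3) 0 (k + 1) := by
      intro v hv
      rcases mem_insert.1 hv with rfl | hv
      · simp [mem_itv]
      · rw [mem_singleton.1 hv, mem_itv]
        simp
    simp only [gapUtil, countUtil, Matrix.cons_val_zero, inter_eq_right.2 hsub]
    rw [card_pair (Fin.ne_of_val_ne (by simp; omega))]
    simp
  · simp [gapUtil, countUtil_univ, card_itv]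

theorem itv_subset_of_isLeximin_gapUtil (hk : 1 ≤ k)
    (hA : IsLeximin (pathGraph (k + 3)) (gapUtil k) A) : itv (k + 3) 0 (k + 1) ⊆ A 0 := by
  set S : Finset (Fin (k + 3)) := {0, ⟨k, by omega⟩}
  have hS : S ⊆ A 0 := by
    have hcard : #S ≤ #(A 0 ∩ S) := by
      have := two_le_gapUtil_of_isLeximin hk hA 0
      simp only [gapUtil, countUtil, Matrix.cons_val_zero] at this
      exact card_le_two.trans (by exact_mod_cast this)
    rw [← eq_of_subset_of_card_le inter_subset_right hcard]
    exact inter_subset_left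
  have hfirst : (0 : Fin (k + 3)) ∈ A 0 := hS (by simp [S])
  have hlast : (⟨k, by omega⟩ : Fin (k + 3)) ∈ A 0 := hS (by simp [S])
  intro v hv
  rw [mem_itv] at hv
  exact (hA.1.2.2 0).mem_of_le_of_le_pathGraph hfirst hlast (Fin.zero_le v)
    (show v.val ≤ k by omega)

theorem eq_itv_of_isLeximin_gapUtil (hk : 1 ≤ k)
    (hA : IsLeximin (pathGraph (k + 3)) (gapUtil k) A) : A 1 = itv (k + 3) (k + 1) (k + 3) := by
  have hsub : A 1 ⊆ itv (k + 3) (k + 1) (k + 3) := by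
    intro v hv
    have hv₀ : v ∉ itv (k + 3) 0 (k + 1) := fun h =>
      disjoint_left.1 (hA.1.2.1 0 1 (by decide)) (itv_subset_of_isLeximin_gapUtil hk hA h) hv
    simp only [mem_itv] at hv₀ ⊢
    omega
  refine eq_of_subset_of_card_le hsub ?_
  have := two_le_gapUtil_of_isLeximin hk hA 1
  simp only [gapUtil, Matrix.cons_val_one, Matrix.cons_val_zero, countUtil_univ] at this
  rw [card_itv le_rfl, show k + 3 - (k + 1) = 2 by omega]
  exact_mod_cast this

theorem not_isAlphaPMMS_gapUtil (hk : 1 ≤ k) {α : ℝ} (hα : 0 < α)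
    (hαk : 2 < α * ((k + 3) / 2 : ℕ)) (hA : IsLeximin (pathGraph (k + 3)) (gapUtil k) A) :
    ¬ IsAlphaPMMS (pathGraph (k + 3)) (gapUtil k) A α := by
  intro hpmms
  have hA₁ := eq_itv_of_isLeximin_gapUtil hk hA
  have hadj : AdjUnder (pathGraph (k + 3)) A 1 0 :=
    ⟨⟨k + 1, by omega⟩, by simp [hA₁, mem_itv], ⟨k, by omega⟩,
      itv_subset_of_isLeximin_gapUtil hk hA (by simp [mem_itv]), by simp [pathGraph_adj]⟩
  have hunion : A 1 ∪ A 0 = univ := by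
    refine eq_univ_of_forall fun v => ?_
    rcases Fin.exists_fin_two.1 (hA.1.1 v) with hv | hv <;> simp [hv]
  have h := hpmms 1 0 (by decide) (Or.inr hadj)
  rw [hunion] at h
  simp only [gapUtil, Matrix.cons_val_one, Matrix.cons_val_zero, countUtil_univ, hA₁,
    card_itv le_rfl, show k + 3 - (k + 1) = 2 by omega] at h
  push_cast at h
  linarith [mul_le_mul_of_nonneg_left (half_le_pmms_pathGraph (k + 3)) hα.le]

end Counterexample

end GraphFair

open GraphFair in
/-- For every `α > 0`, there exists an instance consisting of a path graph
and two agents with binary additive utilities such that no connected leximin allocation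
is `α`-PMMS. -/
theorem exists_path_leximin_not_alpha_pmms :
    ∀ α : ℝ, 0 < α →
      ∃ (m : ℕ) (u : Fin 2 → Finset (Fin m) → ℝ),
        (∀ i, BinaryAdditiveUtil (u i)) ∧
        ∀ A : Fin 2 → Finset (Fin m),
          IsLeximin (SimpleGraph.pathGraph m) u A →
          ¬ IsAlphaPMMS (SimpleGraph.pathGraph m) u A α := by
  intro α hα
  obtain ⟨N, hN⟩ := exists_nat_gt (2 / α)
  refine ⟨2 * N + 1 + 3, gapUtil (2 * N + 1), fun i => ?_,
    fun A hA => not_isAlphaPMMS_gapUtil (by omega) hα ?_ hA⟩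
  · fin_cases i <;> exact binaryAdditiveUtil_countUtil _
  · rw [show (2 * N + 1 + 3) / 2 = N + 2 by omega, Nat.cast_add, Nat.cast_two]
    rw [div_lt_iff₀ hα] at hN
    linarith
end

section
/- For a connected simple graph G and n agents with additive utility functions, every connected allocation that is EF1 is also (1/2)-PMMS. -/
open GraphFair in
/-- For a connected simple graph `G` and `n` agents with additive utility
functions, every connected allocation that is EF1 is also `(1/2)`-PMMS. -/
theorem ef1_implies_half_pmms {V : Type*} [DecidableEq V]
    (G : SimpleGraph V) (hG : G.Connected)
    {n : ℕ} (u : Fin n → Finset V → ℝ) (hu : ∀ i, AdditiveUtil (u i))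
    (A : Fin n → Finset V) (hA : IsConnAlloc G A) (hEF1 : IsAlphaEF1 u A 1) :
    IsAlphaPMMS G u A (1 / 2) := by
  intro i j hij _htrig
  obtain ⟨hadd, hnn⟩ := hu i
  have hnonneg : ∀ X : Finset V, 0 ≤ u i X := fun X => by
    rw [hadd]; exact Finset.sum_nonneg fun v _ => hnn v
  have hdisj : Disjoint (A i) (A j) := hA.2.1 i j hij
  have hsum : ∀ (Y Z : Finset V), Disjoint Y Z → u i (Y ∪ Z) = u i Y + u i Z := by
    intro Y Z h
    rw [hadd, hadd, hadd, Finset.sum_union h]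
  have hsingle : ∀ (v : V) (Y : Finset V), v ∈ Y → u i {v} ≤ u i Y := by
    intro v Y hvY
    rw [hadd {v}, hadd Y, Finset.sum_singleton]
    exact Finset.single_le_sum (fun w _ => hnn w) hvY
  have key : ∀ x ∈ (fun p : Finset V × Finset V => min (u i p.1) (u i p.2)) ''
      Part2 G (A i ∪ A j), x ≤ 2 * u i (A i) := by
    rintro x ⟨⟨Y, Z⟩, ⟨hun, hd, -, -⟩, rfl⟩
    simp only at hun hd ⊢
    have htot : u i Y + u i Z = u i (A i) + u i (A j) := by
      rw [← hsum Y Z hd, hun, hsum _ _ hdisj]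
    by_cases hj : A j = ∅
    · have hz : u i (A j) = 0 := by rw [hj, hadd]; simp
      have := min_le_left (u i Y) (u i Z)
      have := min_le_right (u i Y) (u i Z)
      have := hnonneg (A i)
      -- min ≤ (uY+uZ)/2 = u(A i)/2 ≤ 2 u(A i)
      cases le_total (u i Y) (u i Z) with
      | inl h => rw [min_eq_left h]; linarith
      | inr h => rw [min_eq_right h]; linarith
    · obtain ⟨v, hv, hef⟩ := hEF1 i j hij hj
      rw [one_mul] at hef
      have herase : u i (A j) = u i ((A j).erase v) + u i {v} := by
        rw [hadd (A j), hadd ((A j).erase v), hadd {v}, Finset.sum_singleton]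
        exact (Finset.sum_erase_add _ _ hv).symm
      have hvYZ : v ∈ Y ∪ Z := by rw [hun]; exact Finset.mem_union_right _ hv
      rcases Finset.mem_union.mp hvYZ with hvY | hvZ
      · have h1 : u i {v} ≤ u i Y := hsingle v Y hvY
        have := min_le_right (u i Y) (u i Z)
        linarith
      · have h1 : u i {v} ≤ u i Z := hsingle v Z hvZ
        have := min_le_left (u i Y) (u i Z)
        linarith
  have hsSup : pmms G (u i) (A i ∪ A j) ≤ 2 * u i (A i) :=
    Real.sSup_le key (by linarith [hnonneg (A i)])
  linarith
end

section
/- For a connected simple graph G and n agents with binary additive utility functions, every connected allocation that is EF1 is also PMMS. -/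
open GraphFair in
private lemma binAddNat {V : Type*} [DecidableEq V] {u : Finset V → ℝ}
    (hu : BinaryAdditiveUtil u) (X : Finset V) : ∃ m : ℕ, u X = m := by
  rw [hu.1]
  classical
  induction X using Finset.induction with
  | empty => exact ⟨0, by simp⟩
  | @insert a s h ih =>
    obtain ⟨m, hm⟩ := ih
    rw [Finset.sum_insert h, hm]
    rcases hu.2 a with h1 | h1
    · exact ⟨m, by rw [h1]; ring⟩
    · exact ⟨m + 1, by rw [h1]; push_cast; ring⟩

open GraphFair in
/-- For a connected simple graph `G` and `n` agents with binary additive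
utility functions, every connected allocation that is EF1 is also PMMS. -/
theorem ef1_implies_pmms_binary {V : Type*} [DecidableEq V]
    (G : SimpleGraph V) (hG : G.Connected)
    {n : ℕ} (u : Fin n → Finset V → ℝ) (hu : ∀ i, BinaryAdditiveUtil (u i))
    (A : Fin n → Finset V) (hA : IsConnAlloc G A) (hEF1 : IsAlphaEF1 u A 1) :
    IsAlphaPMMS G u A 1 := by
  intro i j hij _hcond
  obtain ⟨hadd, hbin⟩ := hu i
  have hnn : ∀ X : Finset V, (0:ℝ) ≤ u i X := by
    intro X
    obtain ⟨m, hm⟩ := binAddNat (hu i) X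
    rw [hm]; positivity
  have hkey : u i (A j) ≤ u i (A i) + 1 := by
    by_cases hj : A j = ∅
    · rw [hj]
      have : u i (∅ : Finset V) = 0 := by rw [hadd]; simp
      rw [this]
      linarith [hnn (A i)]
    · obtain ⟨v, hv, hle⟩ := hEF1 i j hij hj
      have hsplit : u i (A j) = u i ((A j).erase v) + u i {v} := by
        rw [hadd (A j), hadd ((A j).erase v), hadd {v}]
        rw [Finset.sum_singleton, Finset.sum_erase_add _ _ hv]
      have h1 : u i {v} ≤ 1 := by rcases hbin v with h | h <;> rw [h] <;> norm_num
      rw [one_mul] at hle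
      linarith
  rw [one_mul]
  apply Real.sSup_le
  · rintro x ⟨⟨Y, Z⟩, ⟨hYZ, hdisj, _, _⟩, rfl⟩
    simp only
    have hsum : u i Y + u i Z = u i (A i ∪ A j) := by
      rw [hadd Y, hadd Z, hadd (A i ∪ A j), ← hYZ, Finset.sum_union hdisj]
    have hsub : u i (A i ∪ A j) ≤ u i (A i) + u i (A j) := by
      rw [hadd (A i ∪ A j), hadd (A i), hadd (A j)]
      have h1 := Finset.sum_union_inter (s₁ := A i) (s₂ := A j) (f := fun v => u i {v})
      have h2 : (0:ℝ) ≤ ∑ v ∈ A i ∩ A j, u i {v} :=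
        Finset.sum_nonneg fun v _ => hnn {v}
      linarith
    obtain ⟨mY, hmY⟩ := binAddNat (hu i) Y
    obtain ⟨mZ, hmZ⟩ := binAddNat (hu i) Z
    obtain ⟨k, hk⟩ := binAddNat (hu i) (A i)
    rw [hmY, hmZ, hk]
    have h2min : 2 * min (mY:ℝ) (mZ:ℝ) ≤ (mY:ℝ) + mZ := by
      rcases le_total (mY:ℝ) (mZ:ℝ) with h | h
      · rw [min_eq_left h]; linarith
      · rw [min_eq_right h]; linarith
    have hhalf : min (mY:ℝ) (mZ:ℝ) ≤ (k:ℝ) + 1/2 := by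
      rw [hmY, hmZ] at hsum
      rw [hk] at hkey
      linarith
    have hcast : min (mY:ℝ) (mZ:ℝ) = ((min mY mZ : ℕ) : ℝ) := by
      rw [Nat.cast_min]
    have hlt : ((min mY mZ : ℕ) : ℝ) < (k:ℝ) + 1 := by rw [← hcast]; linarith
    have hnat : min mY mZ ≤ k := by
      have := Nat.lt_succ_iff.mp (by exact_mod_cast hlt : min mY mZ < k + 1)
      exact this
    rw [hcast]
    exact_mod_cast hnat
  · exact hnn (A i)
end

section
/- For a path graph and n agents with monotone utility functions, every connected allocation that is EFX is also PMMS. -/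
section Aux

/-- `B` is an interval of `Fin m`. -/
def FinItv {m : ℕ} (B : Finset (Fin m)) : Prop :=
  ∀ x ∈ B, ∀ z ∈ B, ∀ y : Fin m, x.val ≤ y.val → y.val ≤ z.val → y ∈ B

lemma walk_ivt {m : ℕ} {B : Finset (Fin m)} {a b : ↑(B : Set (Fin m))}
    (p : ((SimpleGraph.pathGraph m).induce (B : Set (Fin m))).Walk a b) :
    ∀ y : Fin m, (a : Fin m).val ≤ y.val → y.val ≤ (b : Fin m).val → y ∈ B := by
  induction p with
  | @nil c =>
    intro y h1 h2
    have : y = (c : Fin m) := Fin.ext (le_antisymm h2 h1)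
    rw [this]; exact c.2
  | @cons x c d h p ih =>
    intro y h1 h2
    by_cases hcy : (c : Fin m).val ≤ y.val
    · exact ih y hcy h2
    · push_neg at hcy
      have hadj : (x : Fin m).val + 1 = (c : Fin m).val ∨ (c : Fin m).val + 1 = (x : Fin m).val := by
        have := h
        rw [SimpleGraph.comap_adj] at this
        exact SimpleGraph.pathGraph_adj.mp this
      rcases hadj with hh | hh
      · have : y.val ≤ (x : Fin m).val := by omega
        have : y = (x : Fin m) := Fin.ext (le_antisymm this h1)
        rw [this]; exact x.2
      · omega

lemma finItv_of_bundleConn {m : ℕ} {B : Finset (Fin m)}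
    (hB : GraphFair.BundleConn (SimpleGraph.pathGraph m) B) : FinItv B := by
  intro x hx z hz y h1 h2
  rcases hB with h | h
  · subst h; simp at hx
  · obtain ⟨p⟩ := h.preconnected ⟨x, hx⟩ ⟨z, hz⟩
    exact walk_ivt p y h1 h2

/-- Half of the key combinatorial claim: junction at `v < w = v+1`. -/
lemma half_lemma {m : ℕ} {Ai Aj Z : Finset (Fin m)} {w : Fin m}
    (hZ : FinItv Z)
    (hAilt : ∀ x ∈ Ai, x.val < w.val) (hAjge : ∀ x ∈ Aj, w.val ≤ x.val)
    (_hwAj : w ∈ Aj) (hwZ : w ∉ Z) (hZsub : Z ⊆ Ai ∪ Aj) :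
    Z ⊆ Ai ∨ Z ⊆ Aj.erase w := by
  by_cases hall : ∀ z ∈ Z, z ∈ Ai
  · exact Or.inl hall
  · push_neg at hall
    obtain ⟨z, hzZ, hzAi⟩ := hall
    have hzAj : z ∈ Aj := by
      rcases Finset.mem_union.mp (hZsub hzZ) with h | h
      · exact absurd h hzAi
      · exact h
    have hwz : w.val ≤ z.val := hAjge z hzAj
    right
    intro z' hz'
    rcases Finset.mem_union.mp (hZsub hz') with h | h
    · exfalso
      have h1 : z'.val ≤ w.val := le_of_lt (hAilt z' h)
      exact hwZ (hZ z' hz' z hzZ w h1 hwz)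
    · exact Finset.mem_erase.mpr ⟨fun he => hwZ (he ▸ hz'), h⟩

/-- Mirror: junction at `w < v = w+1`. -/
lemma half_lemma' {m : ℕ} {Ai Aj Z : Finset (Fin m)} {w : Fin m}
    (hZ : FinItv Z)
    (hAigt : ∀ x ∈ Ai, w.val < x.val) (hAjle : ∀ x ∈ Aj, x.val ≤ w.val)
    (_hwAj : w ∈ Aj) (hwZ : w ∉ Z) (hZsub : Z ⊆ Ai ∪ Aj) :
    Z ⊆ Ai ∨ Z ⊆ Aj.erase w := by
  by_cases hall : ∀ z ∈ Z, z ∈ Ai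
  · exact Or.inl hall
  · push_neg at hall
    obtain ⟨z, hzZ, hzAi⟩ := hall
    have hzAj : z ∈ Aj := by
      rcases Finset.mem_union.mp (hZsub hzZ) with h | h
      · exact absurd h hzAi
      · exact h
    have hzw : z.val ≤ w.val := hAjle z hzAj
    right
    intro z' hz'
    rcases Finset.mem_union.mp (hZsub hz') with h | h
    · exfalso
      have h1 : w.val ≤ z'.val := le_of_lt (hAigt z' h)
      exact hwZ (hZ z hzZ z' hz' w hzw h1)
    · exact Finset.mem_erase.mpr ⟨fun he => hwZ (he ▸ hz'), h⟩

lemma key_lemma {m : ℕ} {Ai Aj Y Z : Finset (Fin m)}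
    (hAi : FinItv Ai) (hAj : FinItv Aj) (hY : FinItv Y) (hZ : FinItv Z)
    (hdis : Disjoint Ai Aj)
    (hcase : Ai = ∅ ∨ ∃ v ∈ Ai, ∃ w ∈ Aj, (SimpleGraph.pathGraph m).Adj v w)
    (hYZ : Y ∪ Z = Ai ∪ Aj) (hd : Disjoint Y Z) :
    Y ⊆ Ai ∨ Z ⊆ Ai ∨ (∃ v ∈ Aj, Y ⊆ Aj.erase v) ∨ (∃ v ∈ Aj, Z ⊆ Aj.erase v) := by
  have hYsub : Y ⊆ Ai ∪ Aj := hYZ ▸ Finset.subset_union_left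
  have hZsub : Z ⊆ Ai ∪ Aj := hYZ ▸ Finset.subset_union_right
  rcases hcase with hAie | ⟨v, hv, w, hw, hadj⟩
  · subst hAie
    rcases Finset.eq_empty_or_nonempty Z with hZe | ⟨z, hz⟩
    · exact Or.inr (Or.inl (by simp [hZe]))
    · have hzAj : z ∈ Aj := by simpa using hZsub hz
      refine Or.inr (Or.inr (Or.inl ⟨z, hzAj, fun y hy => ?_⟩))
      refine Finset.mem_erase.mpr ⟨fun he => ?_, by simpa using hYsub hy⟩
      exact (Finset.disjoint_left.mp hd hy) (he ▸ hz)
  · have hvw := SimpleGraph.pathGraph_adj.mp hadj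
    have hvne : v ∉ Aj := Finset.disjoint_left.mp hdis hv
    have hwne : w ∉ Ai := Finset.disjoint_right.mp hdis hw
    rcases hvw with hh | hh
    · -- v + 1 = w : Ai is left of Aj
      have hAilt : ∀ x ∈ Ai, x.val < w.val := by
        intro x hx
        by_contra hc
        push_neg at hc
        exact hwne (hAi v hv x hx w (by omega) hc)
      have hAjge : ∀ x ∈ Aj, w.val ≤ x.val := by
        intro x hx
        by_contra hc
        push_neg at hc
        exact hvne (hAj x hx w hw v (by omega) (by omega))
      by_cases hwZ : w ∈ Z
      · have hwY : w ∉ Y := Finset.disjoint_right.mp hd hwZ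
        rcases half_lemma hY hAilt hAjge hw hwY hYsub with h | h
        · exact Or.inl h
        · exact Or.inr (Or.inr (Or.inl ⟨w, hw, h⟩))
      · rcases half_lemma hZ hAilt hAjge hw hwZ hZsub with h | h
        · exact Or.inr (Or.inl h)
        · exact Or.inr (Or.inr (Or.inr ⟨w, hw, h⟩))
    · -- w + 1 = v : Ai is right of Aj
      have hAigt : ∀ x ∈ Ai, w.val < x.val := by
        intro x hx
        by_contra hc
        push_neg at hc
        exact hwne (hAi x hx v hv w hc (by omega))
      have hAjle : ∀ x ∈ Aj, x.val ≤ w.val := by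
        intro x hx
        by_contra hc
        push_neg at hc
        exact hvne (hAj w hw x hx v (by omega) (by omega))
      by_cases hwZ : w ∈ Z
      · have hwY : w ∉ Y := Finset.disjoint_right.mp hd hwZ
        rcases half_lemma' hY hAigt hAjle hw hwY hYsub with h | h
        · exact Or.inl h
        · exact Or.inr (Or.inr (Or.inl ⟨w, hw, h⟩))
      · rcases half_lemma' hZ hAigt hAjle hw hwZ hZsub with h | h
        · exact Or.inr (Or.inl h)
        · exact Or.inr (Or.inr (Or.inr ⟨w, hw, h⟩))

end Aux

open GraphFair in
/-- For a path graph and `n` agents with monotone utility functions,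
every connected allocation that is EFX is also PMMS. -/
theorem efx_implies_pmms_path (m : ℕ) {n : ℕ}
    (u : Fin n → Finset (Fin m) → ℝ) (hu : ∀ i, MonotoneUtil (u i))
    (A : Fin n → Finset (Fin m))
    (hA : IsConnAlloc (SimpleGraph.pathGraph m) A) (hEFX : IsEFX u A) :
    IsAlphaPMMS (SimpleGraph.pathGraph m) u A 1 := by
  intro i j hij hcase
  rw [one_mul]
  have hmono := (hu i).1
  have h0 : 0 ≤ u i (A i) :=
    le_trans (hu i).2 (hmono ∅ (A i) (Finset.empty_subset _))
  rw [pmms]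
  apply Real.sSup_le _ h0
  rintro r ⟨⟨Y, Z⟩, hp, rfl⟩
  obtain ⟨hYZ, hdYZ, hcY, hcZ⟩ := hp
  have hbound : ∀ W : Finset (Fin m),
      (W ⊆ A i ∨ ∃ v ∈ A j, W ⊆ (A j).erase v) → u i W ≤ u i (A i) := by
    rintro W (hW | ⟨v, hv, hW⟩)
    · exact hmono _ _ hW
    · have hne : A j ≠ ∅ := fun h => by simp [h] at hv
      exact le_trans (hmono _ _ hW) (hEFX i j hij hne v hv)
  have hkey := key_lemma (finItv_of_bundleConn (hA.2.2 i)) (finItv_of_bundleConn (hA.2.2 j))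
    (finItv_of_bundleConn hcY) (finItv_of_bundleConn hcZ)
    (hA.2.1 i j hij) hcase hYZ hdYZ
  rcases hkey with h | h | h | h
  · exact le_trans (min_le_left _ _) (hbound Y (Or.inl h))
  · exact le_trans (min_le_right _ _) (hbound Z (Or.inl h))
  · exact le_trans (min_le_left _ _) (hbound Y (Or.inr h))
  · exact le_trans (min_le_right _ _) (hbound Z (Or.inr h))
end

section
/- There exists an instance of a path graph and two agents with identical additive utilities that admits a connected allocation which is EF1 but not PMMS. -/
/-! On the path with item values `1, 1, 2`, give the first agent the first item and the second
agent the other two. Dropping the item of value `2` from the second bundle leaves `1`, so the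
allocation is EF1; but cutting the path before the last item gives both sides value `2`, so the
first agent's pairwise maximin share is `2 > 1`. -/

namespace GraphFair

variable {V : Type*}

theorem additiveUtil_sum {w : V → ℝ} (hw : ∀ v, 0 ≤ w v) :
    AdditiveUtil fun X : Finset V => ∑ v ∈ X, w v :=
  ⟨fun _ => by simp only [Finset.sum_singleton], fun v => by simpa using hw v⟩

theorem bundleConn_singleton (G : SimpleGraph V) (v : V) : BundleConn G {v} := by
  right
  rw [Finset.coe_singleton, SimpleGraph.induce_singleton_eq_top]
  exact SimpleGraph.connected_top

theorem bundleConn_pair [DecidableEq V] {G : SimpleGraph V} {v w : V} (h : G.Adj v w) :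
    BundleConn G {v, w} := by
  right
  rw [Finset.coe_pair]
  exact SimpleGraph.induce_pair_connected_of_adj h

theorem le_pmms [Fintype V] [DecidableEq V] {G : SimpleGraph V} {u : Finset V → ℝ}
    {X : Finset V} {p : Finset V × Finset V} (hp : p ∈ Part2 G X) :
    min (u p.1) (u p.2) ≤ pmms G u X :=
  le_csSup ((Set.toFinite _).image _).bddAbove ⟨p, hp, rfl⟩

theorem isAlphaEF1_fin_two [DecidableEq V] {u : Fin 2 → Finset V → ℝ} {A : Fin 2 → Finset V}
    {α : ℝ}
    (h01 : A 1 ≠ ∅ → ∃ v ∈ A 1, α * u 0 ((A 1).erase v) ≤ u 0 (A 0))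
    (h10 : A 0 ≠ ∅ → ∃ v ∈ A 0, α * u 1 ((A 0).erase v) ≤ u 1 (A 1)) :
    IsAlphaEF1 u A α := by
  intro i j hij
  fin_cases i <;> fin_cases j
  exacts [absurd rfl hij, h01, h10, absurd rfl hij]

namespace EF1NotPMMS

noncomputable def weight : Fin 3 → ℝ := ![1, 1, 2]

noncomputable def util (X : Finset (Fin 3)) : ℝ := ∑ v ∈ X, weight v

def alloc : Fin 2 → Finset (Fin 3) := ![{0}, {1, 2}]

theorem isConnAlloc_alloc : IsConnAlloc (SimpleGraph.pathGraph 3) alloc := by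
  refine ⟨by decide, by decide, fun i => ?_⟩
  fin_cases i
  · exact bundleConn_singleton _ _
  · exact bundleConn_pair (by simp [SimpleGraph.pathGraph_adj])

theorem isAlphaEF1_alloc : IsAlphaEF1 (fun _ => util) alloc 1 :=
  isAlphaEF1_fin_two
    (fun _ => ⟨2, by decide, by simp [alloc, util, weight]⟩)
    (fun _ => ⟨0, by decide, by simp [alloc, util, weight]; norm_num⟩)

theorem not_isAlphaPMMS_alloc :
    ¬ IsAlphaPMMS (SimpleGraph.pathGraph 3) (fun _ => util) alloc 1 := by
  intro hPMMS
  have hadj : AdjUnder (SimpleGraph.pathGraph 3) alloc 0 1 :=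
    ⟨0, by decide, 1, by decide, by simp [SimpleGraph.pathGraph_adj]⟩
  have hsplit : (({0, 1}, {2}) : Finset (Fin 3) × Finset (Fin 3)) ∈
      Part2 (SimpleGraph.pathGraph 3) (alloc 0 ∪ alloc 1) :=
    ⟨by decide, by decide, bundleConn_pair (by simp [SimpleGraph.pathGraph_adj]),
      bundleConn_singleton _ _⟩
  have hbound := hPMMS 0 1 (by decide) (Or.inr hadj)
  rw [one_mul] at hbound
  have hshare := (le_pmms hsplit).trans hbound
  simp [alloc, util, weight] at hshare
  norm_num at hshare

end EF1NotPMMS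

end GraphFair

open GraphFair in
/-- There exists a path instance with two agents having identical additive
utilities that admits a connected allocation which is EF1 but not PMMS. -/
theorem exists_path_ef1_not_pmms :
    ∃ (m : ℕ) (u : Finset (Fin m) → ℝ) (A : Fin 2 → Finset (Fin m)),
      AdditiveUtil u ∧ IsConnAlloc (SimpleGraph.pathGraph m) A ∧
      IsAlphaEF1 (fun _ => u) A 1 ∧
      ¬ IsAlphaPMMS (SimpleGraph.pathGraph m) (fun _ => u) A 1 :=
  ⟨3, EF1NotPMMS.util, EF1NotPMMS.alloc,
    additiveUtil_sum fun v => by fin_cases v <;> norm_num [EF1NotPMMS.weight],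
    EF1NotPMMS.isConnAlloc_alloc, EF1NotPMMS.isAlphaEF1_alloc, EF1NotPMMS.not_isAlphaPMMS_alloc⟩
end

section
/- Let G be a tree, u a monotone utility function, and P a partition of the vertex set of G into bundles each of which induces a connected subgraph. Then P contains at least one bundle that is good for u, i.e., a bundle B with u(B) ≥ PMMS(B∪B') for every bundle B' of P neighbouring B. -/
/-!
Take a bundle `P i` of maximal utility. For any neighbour `P j`, let `(Y, Z)` split `P i ∪ P j`
into connected parts. If neither part lay inside `P i` or inside `P j`, both `Y` and `Z` would
contain an edge between `P i` and `P j`; these edges would be distinct, and together with paths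
inside `P i` and `P j` they would close a cycle in the tree. So one part lies in `P i` or in
`P j`, and by monotonicity `min (u Y) (u Z) ≤ max (u (P i)) (u (P j)) = u (P i)`.
-/

namespace SimpleGraph

variable {V : Type*} {G : SimpleGraph V}

theorem reachable_deleteEdges_of_preconnected_induce {s : Set V}
    (hs : (G.induce s).Preconnected) {x y : V} (hx : x ∈ s) (hy : y ∈ s)
    {e : Sym2 V} {v : V} (hve : v ∈ e) (hvs : v ∉ s) :
    (G.deleteEdges {e}).Reachable x y := by
  let f : G.induce s →g G.deleteEdges {e} :=
    ⟨Subtype.val, fun {a b} hab => by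
      refine deleteEdges_adj.mpr ⟨hab, fun he => ?_⟩
      rw [Set.mem_singleton_iff] at he
      rcases Sym2.mem_iff.mp (he ▸ hve) with rfl | rfl
      exacts [hvs a.2, hvs b.2]⟩
  exact (hs ⟨x, hx⟩ ⟨y, hy⟩).map f

theorem IsAcyclic.eq_of_adj_of_adj_of_preconnected_induce (hG : G.IsAcyclic) {s t : Set V}
    (hs : (G.induce s).Preconnected) (ht : (G.induce t).Preconnected) (hst : Disjoint s t)
    {a₁ a₂ b₁ b₂ : V} (ha₁ : a₁ ∈ s) (ha₂ : a₂ ∈ s) (hb₁ : b₁ ∈ t) (hb₂ : b₂ ∈ t)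
    (h₁ : G.Adj a₁ b₁) (h₂ : G.Adj a₂ b₂) : a₁ = a₂ := by
  by_contra hne
  have hb₁s : b₁ ∉ s := fun h => hst.notMem_of_mem_left h hb₁
  refine isBridge_iff.mp (isAcyclic_iff_forall_adj_isBridge.mp hG h₁) ?_
  have hcross : (G.deleteEdges {s(a₁, b₁)}).Adj a₂ b₂ := by
    refine deleteEdges_adj.mpr ⟨h₂, fun he => ?_⟩
    rcases Sym2.eq_iff.mp (Set.mem_singleton_iff.mp he) with ⟨rfl, -⟩ | ⟨rfl, -⟩
    exacts [hne rfl, hb₁s ha₂]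
  have hreach_s := reachable_deleteEdges_of_preconnected_induce hs ha₁ ha₂
    (Sym2.mem_mk_right a₁ b₁) hb₁s
  have hreach_t := reachable_deleteEdges_of_preconnected_induce ht hb₂ hb₁
    (Sym2.mem_mk_left a₁ b₁) (hst.notMem_of_mem_left ha₁)
  exact hreach_s.trans (hcross.reachable.trans hreach_t)

end SimpleGraph

namespace GraphFair

variable {V : Type*} {G : SimpleGraph V}

theorem BundleConn.preconnected_induce {B : Finset V} (hB : BundleConn G B) :
    (G.induce (B : Set V)).Preconnected := by
  rcases hB with rfl | hB
  · exact fun x => absurd x.2 (by simp)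
  · exact hB.preconnected

theorem BundleConn.exists_adj_mem_of_not_subset [DecidableEq V] {A B Y : Finset V}
    (hY : BundleConn G Y) (hYAB : Y ⊆ A ∪ B) (hYA : ¬ Y ⊆ A) (hYB : ¬ Y ⊆ B) :
    ∃ a ∈ Y, ∃ b, a ∈ A ∧ b ∈ B ∧ G.Adj a b := by
  obtain ⟨x, hxY, hxB⟩ := Finset.not_subset.mp hYB
  obtain ⟨y, hyY, hyA⟩ := Finset.not_subset.mp hYA
  have hxA : x ∈ A := (Finset.mem_union.mp (hYAB hxY)).resolve_right hxB
  obtain ⟨w⟩ := hY.preconnected_induce ⟨x, hxY⟩ ⟨y, hyY⟩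
  obtain ⟨d, -, hdA, hdA'⟩ := w.exists_boundary_dart {v | (v : V) ∈ A} hxA hyA
  exact ⟨d.fst, d.fst.2, d.snd, hdA,
    (Finset.mem_union.mp (hYAB d.snd.2)).resolve_left hdA', d.adj⟩

variable [DecidableEq V]

theorem subset_or_subset_of_union_eq_union (hG : G.IsAcyclic) {A B Y Z : Finset V}
    (hAB : Disjoint A B) (hA : BundleConn G A) (hB : BundleConn G B)
    (hY : BundleConn G Y) (hZ : BundleConn G Z) (hYZ : Disjoint Y Z) (hun : Y ∪ Z = A ∪ B) :
    Y ⊆ A ∨ Y ⊆ B ∨ Z ⊆ A ∨ Z ⊆ B := by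
  by_contra! ⟨hYA, hYB, hZA, hZB⟩
  obtain ⟨a₁, ha₁Y, b₁, ha₁, hb₁, h₁⟩ :=
    hY.exists_adj_mem_of_not_subset (hun ▸ Finset.subset_union_left) hYA hYB
  obtain ⟨a₂, ha₂Z, b₂, ha₂, hb₂, h₂⟩ :=
    hZ.exists_adj_mem_of_not_subset (hun ▸ Finset.subset_union_right) hZA hZB
  have : a₁ = a₂ := hG.eq_of_adj_of_adj_of_preconnected_induce hA.preconnected_induce
    hB.preconnected_induce (Finset.disjoint_coe.mpr hAB) ha₁ ha₂ hb₁ hb₂ h₁ h₂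
  exact Finset.disjoint_left.mp hYZ ha₁Y (this ▸ ha₂Z)

theorem pmms_union_le_max (hG : G.IsAcyclic) {u : Finset V → ℝ} (hu : MonotoneUtil u)
    {A B : Finset V} (hAB : Disjoint A B) (hA : BundleConn G A) (hB : BundleConn G B) :
    pmms G u (A ∪ B) ≤ max (u A) (u B) := by
  have hmono : ∀ {X Y}, X ⊆ Y → u X ≤ u Y := hu.1 _ _
  refine Real.sSup_le ?_ ((hu.2.trans (hmono A.empty_subset)).trans (le_max_left _ _))
  rintro _ ⟨⟨Y, Z⟩, ⟨hun, hYZ, hY, hZ⟩, rfl⟩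
  rcases subset_or_subset_of_union_eq_union hG hAB hA hB hY hZ hYZ hun with h | h | h | h
  · exact (min_le_left _ _).trans ((hmono h).trans (le_max_left _ _))
  · exact (min_le_left _ _).trans ((hmono h).trans (le_max_right _ _))
  · exact (min_le_right _ _).trans ((hmono h).trans (le_max_left _ _))
  · exact (min_le_right _ _).trans ((hmono h).trans (le_max_right _ _))

end GraphFair

open GraphFair in
/-- Let `G` be a tree, `u` a monotone utility function, and `P` a partition
of the vertex set into connected bundles. Then `P` contains at least one good bundle for
`u`, i.e., a bundle `P i` with `u (P i) ≥ PMMS(P i ∪ P j)` for every neighbouring bundle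
`P j`. -/
theorem tree_monotone_exists_good_bundle {V : Type*} [DecidableEq V]
    (G : SimpleGraph V) (hG : G.IsTree)
    (u : Finset V → ℝ) (hu : MonotoneUtil u)
    {n : ℕ} (hn : 0 < n) (P : Fin n → Finset V) (hP : IsConnAlloc G P) :
    ∃ i : Fin n, ∀ j : Fin n, j ≠ i → AdjUnder G P i j →
      pmms G u (P i ∪ P j) ≤ u (P i) := by
  have : Nonempty (Fin n) := Fin.pos_iff_nonempty.mp hn
  obtain ⟨i, hi⟩ := Finite.exists_max fun i : Fin n => u (P i)
  refine ⟨i, fun j hji _ => ?_⟩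
  calc pmms G u (P i ∪ P j)
      ≤ max (u (P i)) (u (P j)) := pmms_union_le_max hG.isAcyclic hu
        (hP.2.1 i j hji.symm) (hP.2.2 i) (hP.2.2 j)
    _ = u (P i) := max_eq_left (hi j)
end
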